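/- arXiv:math/0604556 — 3 statements merged into one kernel-verified Lean document; each statement's English description precedes it below -/
import Mathlib

section
/- Let f : ℝ^n → ℝ be separately convex (convex in each of the n scalar variables when the others are fixed) and satisfy |f(x)| ≤ β(1 + |x|^p) for some β > 0 and p ≥ 1. Then f is locally Lipschitz; more precisely, |f(x) − f(y)| ≤ Cβ(1 + |x|^{p−1} + |y|^{p−1})|x − y| for all x, y, with C depending only on n and p. -/
open MeasureTheory
noncomputable section

/-- Euclidean norm on ℝⁿ (as a pi type). -/
def vnormn {n : ℕ} (x : Fin n → ℝ) : ℝ := Real.sqrt (∑ i, x i ^ 2)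

lemma vnormn_nonneg {n : ℕ} (x : Fin n → ℝ) : 0 ≤ vnormn x := Real.sqrt_nonneg _

lemma sq_vnormn {n : ℕ} (x : Fin n → ℝ) : vnormn x ^ 2 = ∑ i, x i ^ 2 :=
  Real.sq_sqrt (Finset.sum_nonneg fun _ _ => sq_nonneg _)

lemma abs_apply_le_vnormn {n : ℕ} (x : Fin n → ℝ) (i : Fin n) : |x i| ≤ vnormn x := by
  rw [← Real.sqrt_sq_eq_abs]
  exact Real.sqrt_le_sqrt (Finset.single_le_sum (fun j _ => sq_nonneg (x j)) (Finset.mem_univ i))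

lemma sqrt_le_of_sq {a b : ℝ} (hb : 0 ≤ b) (h : a ≤ b ^ 2) : Real.sqrt a ≤ b := by
  calc Real.sqrt a ≤ Real.sqrt (b ^ 2) := Real.sqrt_le_sqrt h
  _ = b := by rw [Real.sqrt_sq hb]

lemma vnormn_update_le {n : ℕ} (z : Fin n → ℝ) (i : Fin n) (u : ℝ) :
    vnormn (Function.update z i u) ≤ vnormn z + |u| := by
  apply sqrt_le_of_sq (add_nonneg (vnormn_nonneg z) (abs_nonneg u))
  have h1 : ∑ j, (Function.update z i u j) ^ 2 ≤ (∑ j, z j ^ 2) + u ^ 2 := by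
    have key : ∀ j, (Function.update z i u j) ^ 2 ≤ z j ^ 2 + (if j = i then u ^ 2 - z j ^ 2 else 0) := by
      intro j
      by_cases h : j = i <;> simp [Function.update, h]
    calc ∑ j, (Function.update z i u j) ^ 2
        ≤ ∑ j, (z j ^ 2 + (if j = i then u ^ 2 - z j ^ 2 else 0)) :=
          Finset.sum_le_sum fun j _ => key j
      _ = (∑ j, z j ^ 2) + ∑ j, (if j = i then u ^ 2 - z j ^ 2 else 0) := Finset.sum_add_distrib
      _ = (∑ j, z j ^ 2) + (u ^ 2 - z i ^ 2) := by rw [Finset.sum_ite_eq' Finset.univ i]; simp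
      _ ≤ (∑ j, z j ^ 2) + u ^ 2 := by nlinarith [sq_nonneg (z i)]
  have h2 : (∑ j, z j ^ 2) = vnormn z ^ 2 := (sq_vnormn z).symm
  nlinarith [vnormn_nonneg z, abs_nonneg u, sq_abs u, mul_nonneg (vnormn_nonneg z) (abs_nonneg u)]

lemma vnormn_mix_le {n : ℕ} (x y z : Fin n → ℝ) (h : ∀ j, z j = x j ∨ z j = y j) :
    vnormn z ≤ vnormn x + vnormn y := by
  apply sqrt_le_of_sq (add_nonneg (vnormn_nonneg x) (vnormn_nonneg y))
  have h1 : ∑ j, z j ^ 2 ≤ (∑ j, x j ^ 2) + ∑ j, y j ^ 2 := by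
    rw [← Finset.sum_add_distrib]
    apply Finset.sum_le_sum
    intro j _
    rcases h j with hj | hj <;> rw [hj] <;> nlinarith [sq_nonneg (x j), sq_nonneg (y j)]
  nlinarith [sq_vnormn x, sq_vnormn y, mul_nonneg (vnormn_nonneg x) (vnormn_nonneg y)]

/-- 1D estimate: convex function bounded by M near [b,a] has difference quotient bound. -/
lemma oned {g : ℝ → ℝ} (hg : ConvexOn ℝ Set.univ g) {a b δ M : ℝ} (hδ : 0 < δ)
    (hM : ∀ u, min a b - δ ≤ u → u ≤ max a b + δ → |g u| ≤ M) :
    |g a - g b| ≤ 2 * M * |a - b| / δ := by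
  have hM0 : 0 ≤ M := le_trans (abs_nonneg _)
    (hM a (by have := min_le_left a b; linarith) (by have := le_max_left a b; linarith))
  have key : ∀ a b : ℝ, b < a → (∀ u, b - δ ≤ u → u ≤ a + δ → |g u| ≤ M) →
      |g a - g b| ≤ 2 * M * (a - b) / δ := by
    intro a b hba hMab
    have hd : (0:ℝ) < a - b := by linarith
    have hub : (g a - g b) / (a - b) ≤ (g (a + δ) - g a) / δ := by
      have := hg.slope_mono_adjacent (Set.mem_univ b) (Set.mem_univ (a + δ)) hba (by linarith)
      simpa using this
    have hlb : (g b - g (b - δ)) / δ ≤ (g a - g b) / (a - b) := by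
      have := hg.slope_mono_adjacent (Set.mem_univ (b - δ)) (Set.mem_univ a) (by linarith) hba
      simpa using this
    rw [div_le_div_iff₀ hd hδ] at hub
    rw [div_le_div_iff₀ hδ hd] at hlb
    have hb1 : |g (a + δ)| ≤ M := hMab _ (by linarith) (by linarith)
    have hb2 : |g a| ≤ M := hMab _ (by linarith) (by linarith)
    have hb3 : |g (b - δ)| ≤ M := hMab _ (by linarith) (by linarith)
    have hb4 : |g b| ≤ M := hMab _ (by linarith) (by linarith)
    rw [abs_le] at hb1 hb2 hb3 hb4 ⊢
    constructor
    · have h2 : -(2 * M * (a - b)) ≤ (g a - g b) * δ := by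
        nlinarith [mul_le_mul_of_nonneg_right (show -(2*M) ≤ g b - g (b - δ) by linarith) hd.le]
      calc -(2 * M * (a - b) / δ) = -(2 * M * (a - b)) / δ := by ring
        _ ≤ ((g a - g b) * δ) / δ := div_le_div_of_nonneg_right h2 hδ.le
        _ = g a - g b := by field_simp
    · have h2 : (g a - g b) * δ ≤ 2 * M * (a - b) := by
        nlinarith [mul_le_mul_of_nonneg_right (show g (a + δ) - g a ≤ 2*M by linarith) hd.le]
      calc g a - g b = ((g a - g b) * δ) / δ := by field_simp
        _ ≤ (2 * M * (a - b)) / δ := div_le_div_of_nonneg_right h2 hδ.le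
  rcases lt_trichotomy a b with h | h | h
  · have key' := key b a h (fun u h1 h2 => hM u
      (by have := min_le_left a b; linarith) (by have := le_max_right a b; linarith))
    rw [abs_sub_comm, abs_sub_comm a b]
    calc |g b - g a| ≤ 2 * M * (b - a) / δ := key'
    _ = 2 * M * |b - a| / δ := by rw [abs_of_pos (by linarith)]
  · subst h; simp only [sub_self, abs_zero]; positivity
  · have key' := key a b h (fun u h1 h2 => hM u
      (by have := min_le_right a b; linarith) (by have := le_max_left a b; linarith))
    calc |g a - g b| ≤ 2 * M * (a - b) / δ := key'
    _ = 2 * M * |a - b| / δ := by rw [abs_of_pos (by linarith)]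

set_option maxHeartbeats 1600000 in
/-- A separately convex function with p-growth is locally Lipschitz, with the
explicit estimate; C depends only on n and p. -/
theorem stmt1 (n : ℕ) (p : ℝ) (hp : 1 ≤ p) :
    ∃ C > 0, ∀ (f : (Fin n → ℝ) → ℝ) (β : ℝ), 0 < β →
      (∀ (i : Fin n) (x : Fin n → ℝ),
        ConvexOn ℝ Set.univ (fun t : ℝ => f (Function.update x i t))) →
      (∀ x, |f x| ≤ β * (1 + vnormn x ^ p)) →
      ∀ x y, |f x - f y| ≤
        C * β * (1 + vnormn x ^ (p - 1) + vnormn y ^ (p - 1)) * vnormn (x - y) := by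
  have h3p : (0:ℝ) < (3:ℝ) ^ p := Real.rpow_pos_of_pos (by norm_num) p
  have h3q : (0:ℝ) < (3:ℝ) ^ (p - 1) := Real.rpow_pos_of_pos (by norm_num) (p - 1)
  refine ⟨2 * ((n:ℝ) + 1) * (1 + (3:ℝ) ^ p) * (3:ℝ) ^ (p - 1), by positivity, ?_⟩
  intro f β hβ hconv hgrow x y
  have hp0 : (0:ℝ) ≤ p := by linarith
  have hq0 : (0:ℝ) ≤ p - 1 := by linarith
  set X := vnormn x with hXdef
  set Y := vnormn y with hYdef
  set D := vnormn (x - y) with hDdef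
  have hX : 0 ≤ X := vnormn_nonneg x
  have hY : 0 ≤ Y := vnormn_nonneg y
  have hD : 0 ≤ D := vnormn_nonneg _
  set R : ℝ := 1 + X + Y with hRdef
  have hR1 : 1 ≤ R := by linarith
  have hR0 : (0:ℝ) < R := by linarith
  set M : ℝ := β * (1 + (3 * R) ^ p) with hMdef
  have h3R0 : (0:ℝ) < 3 * R := by linarith
  have hM0 : 0 < M := by
    have : (0:ℝ) < (3*R) ^ p := Real.rpow_pos_of_pos h3R0 p
    have : (0:ℝ) < 1 + (3*R) ^ p := by linarith
    exact mul_pos hβ this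
  -- the telescoping family
  set z : ℕ → Fin n → ℝ := fun k j => if (j:ℕ) < k then x j else y j with hzdef
  have hz0 : z 0 = y := funext fun j => by simp [hzdef]
  have hzn : z n = x := funext fun j => by simp [hzdef, j.isLt]
  have htel : f x - f y = ∑ k ∈ Finset.range n, (f (z (k+1)) - f (z k)) := by
    rw [Finset.sum_range_sub (fun k => f (z k)), hz0, hzn]
  -- bound on each step
  have hstep : ∀ k, k < n → |f (z (k+1)) - f (z k)| ≤ 2 * M * D / R := by
    intro k hk
    set i : Fin n := ⟨k, hk⟩ with hidef
    have hival : (i:ℕ) = k := rfl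
    have hz1 : z (k+1) = Function.update (z k) i (x i) := by
      funext j
      by_cases hji : j = i
      · subst hji; simp [hzdef, hival]
      · have hjk : (j:ℕ) ≠ k := fun h => hji (Fin.ext (h.trans hival.symm))
        rw [Function.update_of_ne hji]
        simp only [hzdef]
        have : ((j:ℕ) < k+1) ↔ ((j:ℕ) < k) := by omega
        rw [if_congr this rfl rfl]
    have hz2 : z k = Function.update (z k) i (y i) := by
      have hzki : z k i = y i := by simp [hzdef, hival]
      rw [← hzki, Function.update_eq_self]
    -- norms of intermediate points
    have hmix : vnormn (z k) ≤ X + Y := by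
      apply vnormn_mix_le
      intro j
      by_cases h : (j:ℕ) < k <;> simp [hzdef, h]
    -- the sup bound for the 1D lemma
    have hMbound : ∀ u, min (x i) (y i) - R ≤ u → u ≤ max (x i) (y i) + R →
        |f (Function.update (z k) i u)| ≤ M := by
      intro u h1 h2
      have hxi : |x i| ≤ X := abs_apply_le_vnormn x i
      have hyi : |y i| ≤ Y := abs_apply_le_vnormn y i
      have habs_u : |u| ≤ X + Y + R := by
        rw [abs_le]
        constructor
        · have hmin : -|x i| - |y i| ≤ min (x i) (y i) :=
            le_min (by have := neg_abs_le (x i); have := abs_nonneg (y i); linarith)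
              (by have := neg_abs_le (y i); have := abs_nonneg (x i); linarith)
          linarith
        · have hmax : max (x i) (y i) ≤ |x i| + |y i| :=
            max_le (by have := le_abs_self (x i); have := abs_nonneg (y i); linarith)
              (by have := le_abs_self (y i); have := abs_nonneg (x i); linarith)
          linarith
      have hnorm : vnormn (Function.update (z k) i u) ≤ 3 * R := by
        have := vnormn_update_le (z k) i u
        have hXY : X + Y = R - 1 := by rw [hRdef]; ring
        nlinarith
      have hpow : vnormn (Function.update (z k) i u) ^ p ≤ (3 * R) ^ p :=
        Real.rpow_le_rpow (vnormn_nonneg _) hnorm hp0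
      calc |f (Function.update (z k) i u)|
          ≤ β * (1 + vnormn (Function.update (z k) i u) ^ p) := hgrow _
        _ ≤ β * (1 + (3 * R) ^ p) := by nlinarith
    have h1d := oned (hconv i (z k)) hR0 hMbound
    have habs : |x i - y i| ≤ D := by
      have : x i - y i = (x - y) i := by simp [Pi.sub_apply]
      rw [this]
      exact abs_apply_le_vnormn (x - y) i
    calc |f (z (k+1)) - f (z k)|
        = |f (Function.update (z k) i (x i)) - f (Function.update (z k) i (y i))| := by
          rw [← hz1, ← hz2]
      _ ≤ 2 * M * |x i - y i| / R := h1d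
      _ ≤ 2 * M * D / R := by
          apply div_le_div_of_nonneg_right _ hR0.le
          nlinarith
  -- sum up
  have hsum : |f x - f y| ≤ (n:ℝ) * (2 * M * D / R) := by
    rw [htel]
    calc |∑ k ∈ Finset.range n, (f (z (k+1)) - f (z k))|
        ≤ ∑ k ∈ Finset.range n, |f (z (k+1)) - f (z k)| := Finset.abs_sum_le_sum_abs _ _
      _ ≤ ∑ _k ∈ Finset.range n, (2 * M * D / R) :=
          Finset.sum_le_sum fun k hk => hstep k (Finset.mem_range.mp hk)
      _ = (n:ℝ) * (2 * M * D / R) := by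
          rw [Finset.sum_const, Finset.card_range]; simp [nsmul_eq_mul]
  -- final arithmetic
  have hR1p : 1 ≤ R ^ (p - 1) := by
    calc (1:ℝ) = R ^ (0:ℝ) := (Real.rpow_zero R).symm
    _ ≤ R ^ (p - 1) := Real.rpow_le_rpow_of_exponent_le hR1 hq0
  have h3R : (3 * R) ^ p = 3 ^ p * (R ^ (p-1) * R) := by
    rw [Real.mul_rpow (by norm_num) hR0.le]
    congr 1
    calc R ^ p = R ^ ((p - 1) + 1) := by norm_num
    _ = R ^ (p-1) * R := Real.rpow_add_one hR0.ne' (p-1)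
  have hXp : 0 ≤ X ^ (p-1) := Real.rpow_nonneg hX _
  have hYp : 0 ≤ Y ^ (p-1) := Real.rpow_nonneg hY _
  set A : ℝ := 1 + X ^ (p-1) + Y ^ (p-1) with hAdef
  have hA1 : 1 ≤ A := by rw [hAdef]; linarith
  have hA0 : 0 < A := by linarith
  have hRA : R ^ (p-1) ≤ 3 ^ (p-1) * A := by
    set T : ℝ := max 1 (max X Y) with hTdef
    have hT1 : (1:ℝ) ≤ T := le_max_left _ _
    have hRT : R ≤ 3 * T := by
      have h1 : X ≤ T := le_trans (le_max_left X Y) (le_max_right _ _)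
      have h2 : Y ≤ T := le_trans (le_max_right X Y) (le_max_right _ _)
      rw [hRdef]; linarith
    have hstep1 : R ^ (p-1) ≤ (3 * T) ^ (p-1) :=
      Real.rpow_le_rpow hR0.le hRT hq0
    have hstep2 : (3 * T) ^ (p-1) = 3 ^ (p-1) * T ^ (p-1) :=
      Real.mul_rpow (by norm_num) (by linarith)
    have hstep3 : T ^ (p-1) ≤ A := by
      rcases max_cases 1 (max X Y) with ⟨he, _⟩ | ⟨he, _⟩
      · rw [hTdef, he, Real.one_rpow]; linarith
      · rcases max_cases X Y with ⟨he2, _⟩ | ⟨he2, _⟩ <;>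
        · rw [hTdef, he, he2]; rw [hAdef]; linarith
    calc R ^ (p-1) ≤ 3 ^ (p-1) * T ^ (p-1) := by rw [← hstep2]; exact hstep1
    _ ≤ 3 ^ (p-1) * A := mul_le_mul_of_nonneg_left hstep3 h3q.le
  have hM_over : M / R ≤ β * (1 + 3 ^ p) * R ^ (p-1) := by
    rw [div_le_iff₀ hR0, hMdef, h3R]
    have hkey : 1 ≤ R ^ (p-1) * R :=
      calc (1:ℝ) = 1 * 1 := by ring
      _ ≤ R ^ (p-1) * R := mul_le_mul hR1p hR1 zero_le_one (by linarith)
    have hinner : 1 + 3 ^ p * (R ^ (p-1) * R) ≤ (1 + 3 ^ p) * R ^ (p-1) * R := by nlinarith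
    calc β * (1 + 3 ^ p * (R ^ (p-1) * R)) ≤ β * ((1 + 3 ^ p) * R ^ (p-1) * R) :=
        mul_le_mul_of_nonneg_left hinner hβ.le
    _ = β * (1 + 3 ^ p) * R ^ (p-1) * R := by ring
  have hmain : (n:ℝ) * (2 * M / R) ≤ 2 * ((n:ℝ) + 1) * (1 + 3 ^ p) * 3 ^ (p-1) * β * A := by
    have hn0 : (0:ℝ) ≤ (n:ℝ) := Nat.cast_nonneg n
    calc (n:ℝ) * (2 * M / R) = (n:ℝ) * 2 * (M / R) := by ring
    _ ≤ (n:ℝ) * 2 * (β * (1 + 3 ^ p) * R ^ (p-1)) :=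
        mul_le_mul_of_nonneg_left hM_over (by positivity)
    _ ≤ (n:ℝ) * 2 * (β * (1 + 3 ^ p) * (3 ^ (p-1) * A)) := by
        apply mul_le_mul_of_nonneg_left _ (by positivity)
        apply mul_le_mul_of_nonneg_left hRA
        positivity
    _ ≤ ((n:ℝ) + 1) * 2 * (β * (1 + 3 ^ p) * (3 ^ (p-1) * A)) := by
        apply mul_le_mul_of_nonneg_right _ _
        · linarith
        · positivity
    _ = 2 * ((n:ℝ) + 1) * (1 + 3 ^ p) * 3 ^ (p-1) * β * A := by ring
  calc |f x - f y| ≤ (n:ℝ) * (2 * M * D / R) := hsum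
  _ = ((n:ℝ) * (2 * M / R)) * D := by ring
  _ ≤ (2 * ((n:ℝ) + 1) * (1 + 3 ^ p) * 3 ^ (p-1) * β * A) * D :=
      mul_le_mul_of_nonneg_right hmain hD
  _ = 2 * ((n:ℝ) + 1) * (1 + (3:ℝ) ^ p) * (3:ℝ) ^ (p - 1) * β * (1 + X ^ (p - 1) + Y ^ (p - 1)) * D := by
      rw [hAdef]
end
end

section
/- With the setting and definition of Q*W as in the previous statement (W Carathéodory with p-growth and p-coercivity), for a.e. x₀ the map (F̄, z) ↦ Q*W(x₀; F̄|z) is continuous on ℝ^{3×2} × ℝ³. -/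
open MeasureTheory Filter Topology

noncomputable section

abbrev E2 : Type := Fin 2 → ℝ
abbrev E3 : Type := Fin 3 → ℝ
abbrev M33 : Type := Matrix (Fin 3) (Fin 3) ℝ
abbrev M32 : Type := Matrix (Fin 3) (Fin 2) ℝ

/-- Euclidean norm on ℝ³. -/
def vnorm3 (z : E3) : ℝ := Real.sqrt (∑ i, z i ^ 2)

/-- Frobenius norm on 3×3 matrices. -/
def mnorm33 (F : M33) : ℝ := Real.sqrt (∑ i, ∑ j, F i j ^ 2)

/-- Frobenius norm on 3×2 matrices. -/
def mnorm32 (F : M32) : ℝ := Real.sqrt (∑ i, ∑ j, F i j ^ 2)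

/-- The 3×3 matrix (F̄|z) whose first two columns are those of F̄ and whose third
column is z. -/
def cols (Fb : M32) (z : E3) : M33 :=
  Matrix.of fun i j => if hj : (j : ℕ) < 2 then Fb i ⟨j, hj⟩ else z i

/-- Q' × (−1,1) where Q' = (0,1)². -/
def stripset : Set (E2 × ℝ) :=
  {x | (∀ j, x.1 j ∈ Set.Ioo (0 : ℝ) 1) ∧ x.2 ∈ Set.Ioo (-1 : ℝ) 1}

/-- In-plane gradient D_αφ as a 3×2 matrix. -/
def Dalpha (φ : E2 × ℝ → E3) (x : E2 × ℝ) : M32 :=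
  Matrix.of fun i j => fderiv ℝ φ x (Pi.single j (1 : ℝ), 0) i

/-- Transverse derivative D₃φ as a vector of ℝ³. -/
def D3 (φ : E2 × ℝ → E3) (x : E2 × ℝ) : E3 :=
  fun i => fderiv ℝ φ x ((0 : E2), (1 : ℝ)) i

/-- A representative of a W^{1,p}(S;ℝ³) map: differentiable on S with the map and
its gradient in L^p(S). -/
def SobOn (p : ℝ) (φ : E2 × ℝ → E3) (S : Set (E2 × ℝ)) : Prop :=
  (∀ x ∈ S, DifferentiableAt ℝ φ x) ∧
  MemLp φ (ENNReal.ofReal p) (volume.restrict S) ∧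
  MemLp (fun x => fderiv ℝ φ x) (ENNReal.ofReal p) (volume.restrict S)

/-- Q'-periodicity in the in-plane variables. -/
def QPeriodic (φ : E2 × ℝ → E3) : Prop :=
  ∀ (x : E2 × ℝ) (k : Fin 2 → ℤ), φ (x.1 + fun j => (k j : ℝ), x.2) = φ x

/-- Values attainable in the infimum defining Q*W. -/
def QstarSet (QW : ℝ → M33 → ℝ) (p : ℝ) (Fb : M32) (z : E3) : Set ℝ :=
  {c | ∃ L : ℝ, 0 < L ∧ ∃ φ : E2 × ℝ → E3, SobOn p φ stripset ∧ QPeriodic φ ∧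
    (L / 2) • (∫ x in stripset, D3 φ x) = z ∧
    c = (1 / 2) * ∫ x in stripset, QW x.2 (cols (Fb + Dalpha φ x) (L • D3 φ x))}

/-- Q*W(F̄|z): infimum over L > 0 and Q'-periodic φ ∈ W^{1,p} with prescribed
average (L/2)∫ D₃φ = z of the scaled energy. -/
def Qstar (QW : ℝ → M33 → ℝ) (p : ℝ) (Fb : M32) (z : E3) : ℝ :=
  sInf (QstarSet QW p Fb z)

/-- The open unit cube (0,1)³. -/
def cube3 : Set E3 := {y | ∀ i, y i ∈ Set.Ioo (0 : ℝ) 1}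

/-- A representative of W^{1,p}₀((0,1)³;ℝ³), extended by zero. -/
def SobCube0 (p : ℝ) (φ : E3 → E3) : Prop :=
  (∀ y ∈ cube3, DifferentiableAt ℝ φ y) ∧ (∀ y ∉ cube3, φ y = 0) ∧
  MemLp φ (ENNReal.ofReal p) (volume.restrict cube3) ∧
  MemLp (fun y => fderiv ℝ φ y) (ENNReal.ofReal p) (volume.restrict cube3)

/-- The quasiconvexification (quasiconvex envelope) in the matrix variable. -/
def qcEnv (W : M33 → ℝ) (p : ℝ) (F : M33) : ℝ :=
  sInf {c | ∃ φ : E3 → E3, SobCube0 p φ ∧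
    c = ∫ y in cube3, W (F + Matrix.of fun i j => fderiv ℝ φ y (Pi.single j (1 : ℝ)) i)}


namespace Aux7

lemma sqrt_add_le (a b : ℝ) (ha : 0 ≤ a) (hb : 0 ≤ b) :
    Real.sqrt (a + b) ≤ Real.sqrt a + Real.sqrt b := by
  have h1 := Real.sq_sqrt ha
  have h2 := Real.sq_sqrt hb
  have h3 := Real.sqrt_nonneg a
  have h4 := Real.sqrt_nonneg b
  calc Real.sqrt (a + b) ≤ Real.sqrt ((Real.sqrt a + Real.sqrt b) ^ 2) :=
        Real.sqrt_le_sqrt (by nlinarith [mul_nonneg h3 h4])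
    _ = Real.sqrt a + Real.sqrt b := Real.sqrt_sq (by positivity)

lemma vnorm3_nonneg (z : E3) : 0 ≤ vnorm3 z := Real.sqrt_nonneg _
lemma mnorm33_nonneg (F : M33) : 0 ≤ mnorm33 F := Real.sqrt_nonneg _
lemma mnorm32_nonneg (F : M32) : 0 ≤ mnorm32 F := Real.sqrt_nonneg _

lemma sqrt_sum_sq_add_le {ι : Type} [Fintype ι] (x y : ι → ℝ) :
    Real.sqrt (∑ i, (x i + y i) ^ 2) ≤
      Real.sqrt (∑ i, x i ^ 2) + Real.sqrt (∑ i, y i ^ 2) := by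
  have hx := Real.sqrt_nonneg (∑ i, x i ^ 2)
  have hy := Real.sqrt_nonneg (∑ i, y i ^ 2)
  have hx2 : Real.sqrt (∑ i, x i ^ 2) ^ 2 = ∑ i, x i ^ 2 :=
    Real.sq_sqrt (Finset.sum_nonneg fun i _ => sq_nonneg _)
  have hy2 : Real.sqrt (∑ i, y i ^ 2) ^ 2 = ∑ i, y i ^ 2 :=
    Real.sq_sqrt (Finset.sum_nonneg fun i _ => sq_nonneg _)
  have cs := Real.sum_mul_le_sqrt_mul_sqrt Finset.univ x y
  calc Real.sqrt (∑ i, (x i + y i) ^ 2)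
      ≤ Real.sqrt ((Real.sqrt (∑ i, x i ^ 2) + Real.sqrt (∑ i, y i ^ 2)) ^ 2) := by
        apply Real.sqrt_le_sqrt
        have : ∑ i, (x i + y i) ^ 2 = ∑ i, x i ^ 2 + 2 * ∑ i, x i * y i + ∑ i, y i ^ 2 := by
          rw [Finset.mul_sum, ← Finset.sum_add_distrib, ← Finset.sum_add_distrib]
          exact Finset.sum_congr rfl fun i _ => by ring
        rw [this]; nlinarith
    _ = _ := Real.sqrt_sq (by positivity)

lemma mnorm33_flat (F : M33) :
    mnorm33 F = Real.sqrt (∑ ij : Fin 3 × Fin 3, F ij.1 ij.2 ^ 2) := by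
  rw [mnorm33, Fintype.sum_prod_type]

lemma mnorm33_add_le (F G : M33) : mnorm33 (F + G) ≤ mnorm33 F + mnorm33 G := by
  rw [mnorm33_flat, mnorm33_flat, mnorm33_flat]
  have : ∀ ij : Fin 3 × Fin 3, (F + G) ij.1 ij.2 = F ij.1 ij.2 + G ij.1 ij.2 := by
    intro ij; simp [Matrix.add_apply]
  calc Real.sqrt (∑ ij : Fin 3 × Fin 3, (F + G) ij.1 ij.2 ^ 2)
      = Real.sqrt (∑ ij : Fin 3 × Fin 3, (F ij.1 ij.2 + G ij.1 ij.2) ^ 2) := by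
        simp [Matrix.add_apply]
    _ ≤ _ := sqrt_sum_sq_add_le _ _

lemma mnorm33_neg (F : M33) : mnorm33 (-F) = mnorm33 F := by
  unfold mnorm33
  congr 1
  exact Finset.sum_congr rfl fun i _ => Finset.sum_congr rfl fun j _ => by
    simp [Matrix.neg_apply]

lemma abs_entry_le (F : M33) (i j : Fin 3) : |F i j| ≤ mnorm33 F := by
  rw [← Real.sqrt_sq_eq_abs]
  apply Real.sqrt_le_sqrt
  calc F i j ^ 2 ≤ ∑ j', F i j' ^ 2 :=
        Finset.single_le_sum (f := fun j' => F i j' ^ 2)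
          (fun j' _ => sq_nonneg _) (Finset.mem_univ j)
    _ ≤ ∑ i', ∑ j', F i' j' ^ 2 :=
        Finset.single_le_sum (f := fun i' => ∑ j', F i' j' ^ 2)
          (fun i' _ => Finset.sum_nonneg fun j' _ => sq_nonneg _) (Finset.mem_univ i)

lemma mnorm33_le_of_entries (F : M33) (M : ℝ) (h : ∀ i j, |F i j| ≤ M) :
    mnorm33 F ≤ 3 * M := by
  have hM : 0 ≤ M := le_trans (abs_nonneg _) (h 0 0)
  have : ∑ i, ∑ j, F i j ^ 2 ≤ ∑ _i : Fin 3, ∑ _j : Fin 3, M ^ 2 := by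
    refine Finset.sum_le_sum fun i _ => Finset.sum_le_sum fun j _ => ?_
    calc F i j ^ 2 = |F i j| ^ 2 := (sq_abs _).symm
      _ ≤ M ^ 2 := by nlinarith [h i j, abs_nonneg (F i j)]
  have h9 : (∑ _i : Fin 3, ∑ _j : Fin 3, M ^ 2) = (3 * M) ^ 2 := by
    simp [Finset.sum_const]; ring
  calc mnorm33 F ≤ Real.sqrt (∑ _i : Fin 3, ∑ _j : Fin 3, M ^ 2) := Real.sqrt_le_sqrt this
    _ = 3 * M := by rw [h9]; exact Real.sqrt_sq (by linarith)

end Aux7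

namespace Part2
open Aux7

lemma cols_apply (Fb : M32) (z : E3) (i j : Fin 3) :
    cols Fb z i j = if hj : (j : ℕ) < 2 then Fb i ⟨j, hj⟩ else z i := rfl

lemma cols_add (a b : M32) (c d : E3) :
    cols (a + b) (c + d) = cols a c + cols b d := by
  ext i j
  rw [Matrix.add_apply, cols_apply, cols_apply, cols_apply]
  by_cases hj : (j : ℕ) < 2
  · simp [hj, Matrix.add_apply]
  · simp [hj, Pi.add_apply]

lemma cols_neg (a : M32) (c : E3) : cols (-a) (-c) = -(cols a c) := by
  ext i j
  rw [Matrix.neg_apply, cols_apply, cols_apply]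
  by_cases hj : (j : ℕ) < 2
  · simp [hj, Matrix.neg_apply]
  · simp [hj, Pi.neg_apply]

lemma abs_entry_le32 (F : M32) (i : Fin 3) (j : Fin 2) : |F i j| ≤ mnorm32 F := by
  rw [← Real.sqrt_sq_eq_abs]
  apply Real.sqrt_le_sqrt
  calc F i j ^ 2 ≤ ∑ j', F i j' ^ 2 :=
        Finset.single_le_sum (f := fun j' => F i j' ^ 2)
          (fun j' _ => sq_nonneg _) (Finset.mem_univ j)
    _ ≤ ∑ i', ∑ j', F i' j' ^ 2 :=
        Finset.single_le_sum (f := fun i' => ∑ j', F i' j' ^ 2)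
          (fun i' _ => Finset.sum_nonneg fun j' _ => sq_nonneg _) (Finset.mem_univ i)

lemma abs_entry_le3 (z : E3) (i : Fin 3) : |z i| ≤ vnorm3 z := by
  rw [← Real.sqrt_sq_eq_abs]
  apply Real.sqrt_le_sqrt
  exact Finset.single_le_sum (f := fun i' => z i' ^ 2)
    (fun i' _ => sq_nonneg _) (Finset.mem_univ i)

lemma mnorm33_cols_le (a : M32) (c : E3) :
    mnorm33 (cols a c) ≤ mnorm32 a + vnorm3 c := by
  have key : ∑ i, ∑ j, (cols a c) i j ^ 2 = (∑ i, ∑ j, a i j ^ 2) + ∑ i, c i ^ 2 := by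
    rw [← Finset.sum_add_distrib]
    refine Finset.sum_congr rfl fun i _ => ?_
    rw [Fin.sum_univ_three, Fin.sum_univ_two]
    rw [cols_apply, cols_apply, cols_apply]
    norm_num
  rw [mnorm33, key]
  exact (sqrt_add_le _ _ (Finset.sum_nonneg fun i _ => Finset.sum_nonneg fun j _ => sq_nonneg _)
    (Finset.sum_nonneg fun i _ => sq_nonneg _)).trans (le_of_eq rfl)

lemma continuous_mnorm32 : Continuous mnorm32 := by
  apply Real.continuous_sqrt.comp
  exact continuous_finset_sum _ fun i _ => continuous_finset_sum _ fun j _ =>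
    ((continuous_apply j).comp (continuous_apply i)).pow 2

lemma continuous_vnorm3 : Continuous vnorm3 := by
  apply Real.continuous_sqrt.comp
  exact continuous_finset_sum _ fun i _ => (continuous_apply i).pow 2

lemma continuous_mnorm33 : Continuous mnorm33 := by
  apply Real.continuous_sqrt.comp
  exact continuous_finset_sum _ fun i _ => continuous_finset_sum _ fun j _ =>
    ((continuous_apply j).comp (continuous_apply i)).pow 2

lemma stripset_eq : stripset =
    (Set.univ.pi fun _ : Fin 2 => Set.Ioo (0 : ℝ) 1) ×ˢ Set.Ioo (-1 : ℝ) 1 := by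
  ext x
  simp [stripset, Set.mem_pi]

lemma measurableSet_stripset : MeasurableSet stripset := by
  rw [stripset_eq]
  exact (MeasurableSet.univ_pi fun _ => measurableSet_Ioo).prod measurableSet_Ioo

lemma volume_stripset : volume stripset = 2 := by
  rw [stripset_eq, Measure.volume_eq_prod, Measure.prod_prod, volume_pi_pi, Real.volume_Ioo]
  simp [Real.volume_Ioo]
  norm_num

instance : IsFiniteMeasure (volume.restrict stripset) := by
  constructor
  rw [Measure.restrict_apply_univ, volume_stripset]
  exact ENNReal.ofNat_lt_top

lemma volume_stripset_toReal : (volume stripset).toReal = 2 := by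
  rw [volume_stripset]; simp

end Part2

namespace Part3
open Aux7 Part2

variable {p : ℝ}

lemma rpow_sub_one_le (hp : 1 < p) {t : ℝ} (ht : 0 ≤ t) : t ^ (p - 1) ≤ 1 + t ^ p := by
  rcases le_total t 1 with h | h
  · have : t ^ (p - 1) ≤ 1 := Real.rpow_le_one ht h (by linarith)
    have h2 : 0 ≤ t ^ p := Real.rpow_nonneg ht p
    linarith
  · have : t ^ (p - 1) ≤ t ^ p := Real.rpow_le_rpow_of_exponent_le h (by linarith)
    linarith

lemma rpow_add_le (hp0 : 0 ≤ p) {x y : ℝ} (hx : 0 ≤ x) (hy : 0 ≤ y) :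
    (x + y) ^ p ≤ 2 ^ p * (x ^ p + y ^ p) := by
  have hxp : 0 ≤ x ^ p := Real.rpow_nonneg hx p
  have hyp : 0 ≤ y ^ p := Real.rpow_nonneg hy p
  have h2p : (0 : ℝ) ≤ 2 ^ p := Real.rpow_nonneg (by norm_num) p
  rcases le_total x y with h | h
  · calc (x + y) ^ p ≤ (2 * y) ^ p :=
          Real.rpow_le_rpow (by linarith) (by linarith) hp0
      _ = 2 ^ p * y ^ p := Real.mul_rpow (by norm_num) hy
      _ ≤ 2 ^ p * (x ^ p + y ^ p) := by nlinarith
  · calc (x + y) ^ p ≤ (2 * x) ^ p :=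
          Real.rpow_le_rpow (by linarith) (by linarith) hp0
      _ = 2 ^ p * x ^ p := Real.mul_rpow (by norm_num) hx
      _ ≤ 2 ^ p * (x ^ p + y ^ p) := by nlinarith

lemma mnorm33_zero : mnorm33 0 = 0 := by
  simp [mnorm33, Matrix.zero_apply]

end Part3

namespace Part4
open Aux7 Part2 Part3

variable {p β β' : ℝ} {q : ℝ → M33 → ℝ}

instance : MeasurableSpace M33 := inferInstanceAs (MeasurableSpace (Fin 3 → Fin 3 → ℝ))
instance : BorelSpace M33 := inferInstanceAs (BorelSpace (Fin 3 → Fin 3 → ℝ))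
instance : TopologicalSpace.MetrizableSpace M33 :=
  inferInstanceAs (TopologicalSpace.MetrizableSpace (Fin 3 → Fin 3 → ℝ))
instance : SecondCountableTopology M33 :=
  inferInstanceAs (SecondCountableTopology (Fin 3 → Fin 3 → ℝ))

def Amap (Fb : M32) (L : ℝ) (φ : E2 × ℝ → E3) (x : E2 × ℝ) : M33 :=
  cols (Fb + Dalpha φ x) (L • D3 φ x)

lemma q_cont (hp : 1 < p)
    (hl : ∀ t F₁ F₂, |q t F₁ - q t F₂| ≤
      β * (1 + mnorm33 F₁ ^ (p - 1) + mnorm33 F₂ ^ (p - 1)) * mnorm33 (F₁ - F₂))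
    (t : ℝ) : Continuous fun F => q t F := by
  rw [continuous_iff_continuousAt]
  intro F₀
  rw [ContinuousAt, tendsto_iff_dist_tendsto_zero]
  have hb : ContinuousAt (fun F : M33 =>
      β * (1 + mnorm33 F ^ (p - 1) + mnorm33 F₀ ^ (p - 1)) * mnorm33 (F - F₀)) F₀ := by
    apply ContinuousAt.mul
    · apply ContinuousAt.mul continuousAt_const
      apply ContinuousAt.add (ContinuousAt.add continuousAt_const ?_) continuousAt_const
      exact (continuous_mnorm33.continuousAt).rpow_const (Or.inr (by linarith))
    · exact continuous_mnorm33.continuousAt.comp ((continuous_id.sub continuous_const).continuousAt)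
  have htend : Tendsto (fun F : M33 =>
      β * (1 + mnorm33 F ^ (p - 1) + mnorm33 F₀ ^ (p - 1)) * mnorm33 (F - F₀)) (𝓝 F₀)
      (𝓝 0) := by
    have h2 := hb.tendsto
    have h0 : β * (1 + mnorm33 F₀ ^ (p - 1) + mnorm33 F₀ ^ (p - 1)) * mnorm33 (F₀ - F₀) = 0 := by
      rw [sub_self, mnorm33_zero, mul_zero]
    rwa [h0] at h2
  refine squeeze_zero (fun F => dist_nonneg) (fun F => ?_) htend
  rw [Real.dist_eq]
  exact hl t F F₀

lemma meas_uncurry (hp : 1 < p)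
    (hm : ∀ F, Measurable fun t => q t F)
    (hl : ∀ t F₁ F₂, |q t F₁ - q t F₂| ≤
      β * (1 + mnorm33 F₁ ^ (p - 1) + mnorm33 F₂ ^ (p - 1)) * mnorm33 (F₁ - F₂)) :
    Measurable fun y : M33 × ℝ => q y.2 y.1 :=
  measurable_uncurry_of_continuous_of_measurable
    (u := fun (F : M33) (t : ℝ) => q t F) (fun t => q_cont hp hl t) hm

lemma measurable_Amap (Fb : M32) (L : ℝ) (φ : E2 × ℝ → E3) :
    Measurable (Amap Fb L φ) := by
  have hD : Measurable fun x => fderiv ℝ φ x := measurable_fderiv ℝ φ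
  have hDvi : ∀ (v : E2 × ℝ) (i : Fin 3), Measurable fun x => fderiv ℝ φ x v i := by
    intro v i
    exact ((continuous_apply i).comp
      (ContinuousLinearMap.apply ℝ E3 v).continuous).measurable.comp hD
  apply measurable_pi_lambda
  intro i
  apply measurable_pi_lambda
  intro j
  by_cases hj : (j : ℕ) < 2
  · have : (fun x => Amap Fb L φ x i j) =
        fun x => Fb i ⟨j, hj⟩ + fderiv ℝ φ x (Pi.single (⟨j, hj⟩ : Fin 2) (1 : ℝ), 0) i := by
      funext x
      simp only [Amap, cols_apply, dif_pos hj]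
      rfl
    rw [this]
    exact measurable_const.add (hDvi _ i)
  · have : (fun x => Amap Fb L φ x i j) =
        fun x => L * fderiv ℝ φ x ((0 : E2), (1 : ℝ)) i := by
      funext x
      simp only [Amap, cols_apply, dif_neg hj]
      rfl
    rw [this]
    exact measurable_const.mul (hDvi _ i)

lemma measurable_qA (hp : 1 < p)
    (hm : ∀ F, Measurable fun t => q t F)
    (hl : ∀ t F₁ F₂, |q t F₁ - q t F₂| ≤
      β * (1 + mnorm33 F₁ ^ (p - 1) + mnorm33 F₂ ^ (p - 1)) * mnorm33 (F₁ - F₂))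
    (Fb : M32) (L : ℝ) (φ : E2 × ℝ → E3) :
    Measurable fun x => q x.2 (Amap Fb L φ x) :=
  (meas_uncurry hp hm hl).comp ((measurable_Amap Fb L φ).prodMk measurable_snd)

lemma bound_Amap (Fb : M32) (L : ℝ) (φ : E2 × ℝ → E3) (x : E2 × ℝ) :
    mnorm33 (Amap Fb L φ x) ≤ 3 * (mnorm32 Fb + (1 + |L|) * ‖fderiv ℝ φ x‖) := by
  apply mnorm33_le_of_entries
  intro i j
  have hDnn : (0 : ℝ) ≤ ‖fderiv ℝ φ x‖ := norm_nonneg _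
  have happ : ∀ (v : E2 × ℝ), ‖v‖ ≤ 1 → |fderiv ℝ φ x v i| ≤ ‖fderiv ℝ φ x‖ := by
    intro v hv
    calc |fderiv ℝ φ x v i| = ‖fderiv ℝ φ x v i‖ := (Real.norm_eq_abs _).symm
      _ ≤ ‖fderiv ℝ φ x v‖ := norm_le_pi_norm _ i
      _ ≤ ‖fderiv ℝ φ x‖ * ‖v‖ := (fderiv ℝ φ x).le_opNorm v
      _ ≤ ‖fderiv ℝ φ x‖ * 1 := by nlinarith
      _ = ‖fderiv ℝ φ x‖ := mul_one _
  have hL1 : ‖fderiv ℝ φ x‖ ≤ (1 + |L|) * ‖fderiv ℝ φ x‖ := by nlinarith [abs_nonneg L]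
  by_cases hj : (j : ℕ) < 2
  · have : Amap Fb L φ x i j = Fb i ⟨j, hj⟩ + fderiv ℝ φ x (Pi.single (⟨j, hj⟩ : Fin 2) (1 : ℝ), 0) i := by
      simp only [Amap, cols_apply, dif_pos hj]; rfl
    rw [this]
    have hv : ‖((Pi.single (⟨j, hj⟩ : Fin 2) (1 : ℝ) : E2), (0 : ℝ))‖ ≤ 1 := by
      rw [Prod.norm_def]
      simp [Pi.norm_single]
    calc |Fb i ⟨j, hj⟩ + fderiv ℝ φ x (Pi.single (⟨j, hj⟩ : Fin 2) (1 : ℝ), 0) i|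
        ≤ |Fb i ⟨j, hj⟩| + |fderiv ℝ φ x (Pi.single (⟨j, hj⟩ : Fin 2) (1 : ℝ), 0) i| := abs_add_le _ _
      _ ≤ mnorm32 Fb + ‖fderiv ℝ φ x‖ := add_le_add (abs_entry_le32 Fb i _) (happ _ hv)
      _ ≤ mnorm32 Fb + (1 + |L|) * ‖fderiv ℝ φ x‖ := by linarith
  · have : Amap Fb L φ x i j = L * fderiv ℝ φ x ((0 : E2), (1 : ℝ)) i := by
      simp only [Amap, cols_apply, dif_neg hj]; rfl
    rw [this]
    have hv : ‖((0 : E2), (1 : ℝ))‖ ≤ 1 := by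
      rw [Prod.norm_def]; simp
    have h2 : |L| * |fderiv ℝ φ x ((0 : E2), (1 : ℝ)) i| ≤ |L| * ‖fderiv ℝ φ x‖ :=
      mul_le_mul_of_nonneg_left (happ _ hv) (abs_nonneg L)
    have h3 : |L| * ‖fderiv ℝ φ x‖ ≤ mnorm32 Fb + (1 + |L|) * ‖fderiv ℝ φ x‖ := by
      nlinarith [mnorm32_nonneg Fb, abs_nonneg L]
    calc |L * fderiv ℝ φ x ((0 : E2), (1 : ℝ)) i|
        = |L| * |fderiv ℝ φ x ((0 : E2), (1 : ℝ)) i| := abs_mul _ _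
      _ ≤ mnorm32 Fb + (1 + |L|) * ‖fderiv ℝ φ x‖ := le_trans h2 h3

end Part4

namespace Part5
open Aux7 Part2 Part3 Part4

variable {p β β' : ℝ} {q : ℝ → M33 → ℝ}

lemma toReal_ofReal_p (hp : 1 < p) : (ENNReal.ofReal p).toReal = p :=
  ENNReal.toReal_ofReal (by linarith)

lemma integrable_norm_fderiv_rpow (hp : 1 < p) {φ : E2 × ℝ → E3}
    (hSob : SobOn p φ stripset) :
    Integrable (fun x => ‖fderiv ℝ φ x‖ ^ p) (volume.restrict stripset) := by
  have := hSob.2.2.integrable_norm_rpow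
    (by simp [ENNReal.ofReal_pos]; linarith) (by simp)
  rwa [toReal_ofReal_p hp] at this

lemma integrable_Amap_rpow (hp : 1 < p) (Fb : M32) (L : ℝ) {φ : E2 × ℝ → E3}
    (hSob : SobOn p φ stripset) :
    Integrable (fun x => mnorm33 (Amap Fb L φ x) ^ p) (volume.restrict stripset) := by
  set a : ℝ := 3 * mnorm32 Fb with ha
  set b : ℝ := 3 * (1 + |L|) with hb
  have hanon : 0 ≤ a := by
    have := mnorm32_nonneg Fb; positivity
  have hbnon : 0 ≤ b := by positivity
  have hbnd : ∀ x, mnorm33 (Amap Fb L φ x) ^ p ≤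
      2 ^ p * (a ^ p + b ^ p * ‖fderiv ℝ φ x‖ ^ p) := by
    intro x
    have h1 : mnorm33 (Amap Fb L φ x) ≤ a + b * ‖fderiv ℝ φ x‖ := by
      have := bound_Amap Fb L φ x; rw [ha, hb]; nlinarith [norm_nonneg (fderiv ℝ φ x)]
    have h2 : mnorm33 (Amap Fb L φ x) ^ p ≤ (a + b * ‖fderiv ℝ φ x‖) ^ p :=
      Real.rpow_le_rpow (mnorm33_nonneg _) h1 (by linarith)
    have h3 : (a + b * ‖fderiv ℝ φ x‖) ^ p ≤ 2 ^ p * (a ^ p + (b * ‖fderiv ℝ φ x‖) ^ p) :=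
      rpow_add_le (by linarith) hanon (by positivity)
    have h4 : (b * ‖fderiv ℝ φ x‖) ^ p = b ^ p * ‖fderiv ℝ φ x‖ ^ p :=
      Real.mul_rpow hbnon (norm_nonneg _)
    rw [h4] at h3
    linarith
  have hint : Integrable (fun x => 2 ^ p * (a ^ p + b ^ p * ‖fderiv ℝ φ x‖ ^ p))
      (volume.restrict stripset) :=
    ((integrable_const (a ^ p)).add
      ((integrable_norm_fderiv_rpow hp hSob).const_mul (b ^ p))).const_mul (2 ^ p)
  have hmeas : AEStronglyMeasurable (fun x => mnorm33 (Amap Fb L φ x) ^ p)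
      (volume.restrict stripset) := by
    apply Measurable.aestronglyMeasurable
    exact (Real.continuous_rpow_const (by linarith : (0:ℝ) ≤ p)).measurable.comp
      (continuous_mnorm33.measurable.comp (measurable_Amap Fb L φ))
  refine hint.mono' hmeas ?_
  filter_upwards with x
  rw [Real.norm_eq_abs, abs_of_nonneg (Real.rpow_nonneg (mnorm33_nonneg _) p)]
  exact hbnd x

lemma integrable_qA (hp : 1 < p) (hβ : 0 < β) (hβ' : 0 < β')
    (hm : ∀ F, Measurable fun t => q t F)
    (hg : ∀ t F, β' * mnorm33 F ^ p ≤ q t F ∧ q t F ≤ β * (1 + mnorm33 F ^ p))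
    (hl : ∀ t F₁ F₂, |q t F₁ - q t F₂| ≤
      β * (1 + mnorm33 F₁ ^ (p - 1) + mnorm33 F₂ ^ (p - 1)) * mnorm33 (F₁ - F₂))
    (Fb : M32) (L : ℝ) {φ : E2 × ℝ → E3} (hSob : SobOn p φ stripset) :
    Integrable (fun x => q x.2 (Amap Fb L φ x)) (volume.restrict stripset) := by
  have hint : Integrable (fun x => β * (1 + mnorm33 (Amap Fb L φ x) ^ p))
      (volume.restrict stripset) :=
    ((integrable_const (1 : ℝ)).add (integrable_Amap_rpow hp Fb L hSob)).const_mul β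
  refine hint.mono' ((measurable_qA hp hm hl Fb L φ).aestronglyMeasurable) ?_
  filter_upwards with x
  have h1 := (hg x.2 (Amap Fb L φ x)).1
  have h2 := (hg x.2 (Amap Fb L φ x)).2
  have h3 : 0 ≤ q x.2 (Amap Fb L φ x) := by
    have : 0 ≤ β' * mnorm33 (Amap Fb L φ x) ^ p :=
      mul_nonneg hβ'.le (Real.rpow_nonneg (mnorm33_nonneg _) p)
    linarith
  rw [Real.norm_eq_abs, abs_of_nonneg h3]
  linarith

lemma coercive_int (hp : 1 < p) (hβ : 0 < β) (hβ' : 0 < β')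
    (hm : ∀ F, Measurable fun t => q t F)
    (hg : ∀ t F, β' * mnorm33 F ^ p ≤ q t F ∧ q t F ≤ β * (1 + mnorm33 F ^ p))
    (hl : ∀ t F₁ F₂, |q t F₁ - q t F₂| ≤
      β * (1 + mnorm33 F₁ ^ (p - 1) + mnorm33 F₂ ^ (p - 1)) * mnorm33 (F₁ - F₂))
    (Fb : M32) (L : ℝ) {φ : E2 × ℝ → E3} (hSob : SobOn p φ stripset) :
    β' * ∫ x in stripset, mnorm33 (Amap Fb L φ x) ^ p ≤
      ∫ x in stripset, q x.2 (Amap Fb L φ x) := by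
  rw [← MeasureTheory.integral_const_mul]
  apply setIntegral_mono_on
  · exact (integrable_Amap_rpow hp Fb L hSob).const_mul β'
  · exact integrable_qA hp hβ hβ' hm hg hl Fb L hSob
  · exact measurableSet_stripset
  · intro x _
    exact (hg x.2 (Amap Fb L φ x)).1

end Part5

namespace Part6
open Aux7 Part2 Part3 Part4 Part5

variable {p β β' : ℝ} {q : ℝ → M33 → ℝ}

lemma mem_nonneg (hβ' : 0 < β')
    (hg : ∀ t F, β' * mnorm33 F ^ p ≤ q t F ∧ q t F ≤ β * (1 + mnorm33 F ^ p))
    {Fb : M32} {z : E3} {c : ℝ} (hc : c ∈ QstarSet q p Fb z) : 0 ≤ c := by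
  obtain ⟨L, hL, φ, hSob, hPer, hconstr, rfl⟩ := hc
  have h0 : 0 ≤ ∫ x in stripset, q x.2 (cols (Fb + Dalpha φ x) (L • D3 φ x)) := by
    apply setIntegral_nonneg measurableSet_stripset
    intro x _
    have h1 := (hg x.2 (cols (Fb + Dalpha φ x) (L • D3 φ x))).1
    have h2 : 0 ≤ β' * mnorm33 (cols (Fb + Dalpha φ x) (L • D3 φ x)) ^ p :=
      mul_nonneg hβ'.le (Real.rpow_nonneg (mnorm33_nonneg _) p)
    linarith
  linarith

lemma affine_competitor (hp : 1 < p) (hβ : 0 < β) (hβ' : 0 < β')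
    (hm : ∀ F, Measurable fun t => q t F)
    (hg : ∀ t F, β' * mnorm33 F ^ p ≤ q t F ∧ q t F ≤ β * (1 + mnorm33 F ^ p))
    (Fb : M32) (z : E3) :
    ∃ c ∈ QstarSet q p Fb z, c ≤ β * (1 + mnorm33 (cols Fb z) ^ p) := by
  set ℓ : (E2 × ℝ) →L[ℝ] E3 := (ContinuousLinearMap.snd ℝ E2 ℝ).smulRight z with hℓ
  set φz : E2 × ℝ → E3 := fun x => x.2 • z with hφz
  have hfun : φz = ⇑ℓ := by
    funext x
    simp [hφz, hℓ, ContinuousLinearMap.smulRight_apply]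
  have hfd : ∀ x, fderiv ℝ φz x = ℓ := by
    intro x; rw [hfun]; exact ℓ.fderiv
  have hD3 : ∀ x, D3 φz x = z := by
    intro x
    funext i
    show fderiv ℝ φz x ((0 : E2), (1 : ℝ)) i = z i
    rw [hfd x]
    simp [hℓ, ContinuousLinearMap.smulRight_apply]
  have hDa : ∀ x, Dalpha φz x = 0 := by
    intro x
    ext i j
    show fderiv ℝ φz x (Pi.single j (1 : ℝ), 0) i = 0
    rw [hfd x]
    simp [hℓ, ContinuousLinearMap.smulRight_apply]
  have hSob : SobOn p φz stripset := by
    refine ⟨fun x _ => ?_, ?_, ?_⟩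
    · rw [hfun]; exact ℓ.differentiable.differentiableAt
    · refine MemLp.of_bound ?_ ‖z‖ ?_
      · exact (continuous_snd.smul continuous_const).aestronglyMeasurable
      · filter_upwards [ae_restrict_mem measurableSet_stripset] with x hx
        have hx2 : |x.2| ≤ 1 := by
          have h1 := hx.2.1; have h2 := hx.2.2
          rw [abs_le]; constructor <;> linarith
        rw [norm_smul, Real.norm_eq_abs]
        nlinarith [norm_nonneg z]
    · have : (fun x => fderiv ℝ φz x) = fun _ => ℓ := funext hfd
      rw [this]
      exact memLp_const ℓ
  have hPer : QPeriodic φz := fun x k => rfl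
  have hconstr : ((1 : ℝ) / 2) • (∫ x in stripset, D3 φz x) = z := by
    have : (fun x => D3 φz x) = fun _ => z := funext hD3
    rw [this, setIntegral_const, measureReal_def, volume_stripset_toReal, smul_smul]
    norm_num
  refine ⟨(1 / 2) * ∫ x in stripset, q x.2 (cols Fb z), ?_, ?_⟩
  · refine ⟨1, one_pos, φz, hSob, hPer, hconstr, ?_⟩
    congr 1
    refine setIntegral_congr_fun measurableSet_stripset fun x _ => ?_
    rw [hDa x, hD3 x, add_zero, one_smul]
  · have hIq : Integrable (fun x => q x.2 (cols Fb z)) (volume.restrict stripset) := by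
      refine (integrable_const (β * (1 + mnorm33 (cols Fb z) ^ p))).mono'
        (((hm (cols Fb z)).comp measurable_snd).aestronglyMeasurable) ?_
      filter_upwards with x
      have h1 := (hg x.2 (cols Fb z)).1
      have h2 := (hg x.2 (cols Fb z)).2
      have h3 : 0 ≤ β' * mnorm33 (cols Fb z) ^ p :=
        mul_nonneg hβ'.le (Real.rpow_nonneg (mnorm33_nonneg _) p)
      rw [Real.norm_eq_abs, abs_of_nonneg (by linarith)]
      linarith
    have hle : (∫ x in stripset, q x.2 (cols Fb z)) ≤
        ∫ _x in stripset, β * (1 + mnorm33 (cols Fb z) ^ p) := by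
      apply setIntegral_mono_on hIq (integrable_const _) measurableSet_stripset
      intro x _
      exact (hg x.2 (cols Fb z)).2
    rw [setIntegral_const, measureReal_def, volume_stripset_toReal, smul_eq_mul] at hle
    linarith

end Part6

namespace Part7
open Aux7 Part2 Part3 Part4 Part5 Part6

variable {p β β' : ℝ} {q : ℝ → M33 → ℝ}

set_option maxHeartbeats 1000000 in
lemma key (hp : 1 < p) (hβ : 0 < β) (hβ' : 0 < β')
    (hm : ∀ F, Measurable fun t => q t F)
    (hg : ∀ t F, β' * mnorm33 F ^ p ≤ q t F ∧ q t F ≤ β * (1 + mnorm33 F ^ p))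
    (hl : ∀ t F₁ F₂, |q t F₁ - q t F₂| ≤
      β * (1 + mnorm33 F₁ ^ (p - 1) + mnorm33 F₂ ^ (p - 1)) * mnorm33 (F₁ - F₂))
    (Fb Fb' : M32) (z z' : E3)
    (hδ1 : mnorm33 (cols (Fb' - Fb) (z' - z)) ≤ 1)
    {c : ℝ} (hc : c ∈ QstarSet q p Fb z) :
    ∃ c' ∈ QstarSet q p Fb' z',
      c' ≤ c + β * mnorm33 (cols (Fb' - Fb) (z' - z)) *
        ((3 + 2 ^ p) + ((1 + 2 ^ p) / β') * c) := by
  obtain ⟨L, hL, φ, hSob, hPer, hconstr, hceq⟩ := hc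
  set δ : ℝ := mnorm33 (cols (Fb' - Fb) (z' - z)) with hδdef
  have hδ0 : 0 ≤ δ := mnorm33_nonneg _
  set Emat : M33 := cols (Fb' - Fb) (z' - z) with hEmat
  set u : E3 := L⁻¹ • (z' - z) with hu
  set ℓ : (E2 × ℝ) →L[ℝ] E3 := (ContinuousLinearMap.snd ℝ E2 ℝ).smulRight u with hℓ
  set φ' : E2 × ℝ → E3 := fun x => φ x + ℓ x with hφ'
  have hLu : L • u = z' - z := by
    rw [hu, smul_smul, mul_inv_cancel₀ hL.ne', one_smul]
  have hfd' : ∀ x ∈ stripset, fderiv ℝ φ' x = fderiv ℝ φ x + ℓ := by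
    intro x hx
    rw [hφ']
    rw [fderiv_fun_add (hSob.1 x hx) (ℓ.differentiable.differentiableAt)]
    congr 1
    exact ℓ.fderiv
  have hD3' : ∀ x ∈ stripset, D3 φ' x = D3 φ x + u := by
    intro x hx
    funext i
    show fderiv ℝ φ' x ((0 : E2), (1 : ℝ)) i = D3 φ x i + u i
    rw [hfd' x hx]
    have : ℓ ((0 : E2), (1 : ℝ)) = u := by
      simp [hℓ, ContinuousLinearMap.smulRight_apply]
    simp only [ContinuousLinearMap.add_apply, Pi.add_apply, this]
    rfl
  have hDa' : ∀ x ∈ stripset, Dalpha φ' x = Dalpha φ x := by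
    intro x hx
    ext i j
    show fderiv ℝ φ' x (Pi.single j (1 : ℝ), 0) i = fderiv ℝ φ x (Pi.single j (1 : ℝ), 0) i
    rw [hfd' x hx]
    have : ℓ ((Pi.single j (1 : ℝ) : E2), (0 : ℝ)) = 0 := by
      simp [hℓ, ContinuousLinearMap.smulRight_apply]
    simp only [ContinuousLinearMap.add_apply, Pi.add_apply, this]
    simp
  have hSob' : SobOn p φ' stripset := by
    refine ⟨fun x hx => (hSob.1 x hx).add (ℓ.differentiable.differentiableAt), ?_, ?_⟩
    · have hmemℓ : MemLp (fun x : E2 × ℝ => ℓ x) (ENNReal.ofReal p)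
          (volume.restrict stripset) := by
        refine MemLp.of_bound ℓ.continuous.aestronglyMeasurable ‖u‖ ?_
        filter_upwards [ae_restrict_mem measurableSet_stripset] with x hx
        have hx2 : |x.2| ≤ 1 := by
          have h1 := hx.2.1; have h2 := hx.2.2
          rw [abs_le]; constructor <;> linarith
        have : ℓ x = x.2 • u := by simp [hℓ, ContinuousLinearMap.smulRight_apply]
        rw [this, norm_smul, Real.norm_eq_abs]
        nlinarith [norm_nonneg u]
      exact hSob.2.1.add hmemℓ
    · have hmem : MemLp (fun x : E2 × ℝ => fderiv ℝ φ x + ℓ) (ENNReal.ofReal p)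
          (volume.restrict stripset) := MemLp.add (ε := (E2 × ℝ) →L[ℝ] E3) hSob.2.2 (memLp_const ℓ)
      refine MemLp.ae_eq ?_ hmem
      filter_upwards [ae_restrict_mem measurableSet_stripset] with x hx
      exact (hfd' x hx).symm
  have hPer' : QPeriodic φ' := by
    intro x k
    show φ (x.1 + fun j => (k j : ℝ), x.2) + ℓ (x.1 + fun j => (k j : ℝ), x.2) = φ x + ℓ x
    rw [hPer x k]
    simp [hℓ, ContinuousLinearMap.smulRight_apply]
  have hIntfd : Integrable (fun x => fderiv ℝ φ x) (volume.restrict stripset) :=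
    memLp_one_iff_integrable.mp (hSob.2.2.mono_exponent
      (by rw [ENNReal.one_le_ofReal]; linarith))
  have hIntD3 : Integrable (fun x => D3 φ x) (volume.restrict stripset) := by
    have := (ContinuousLinearMap.apply ℝ E3 ((0 : E2), (1 : ℝ))).integrable_comp hIntfd
    exact this
  have hconstr' : (L / 2) • (∫ x in stripset, D3 φ' x) = z' := by
    have h1 : ∫ x in stripset, D3 φ' x = ∫ x in stripset, (D3 φ x + u) :=
      setIntegral_congr_fun measurableSet_stripset fun x hx => hD3' x hx
    have h2 : ∫ x in stripset, (D3 φ x + u) =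
        (∫ x in stripset, D3 φ x) + ∫ _x in stripset, u :=
      integral_add hIntD3 (integrable_const u)
    have h3 : (∫ _x in stripset, u) = (2 : ℝ) • u := by
      rw [setIntegral_const, measureReal_def, volume_stripset_toReal]
    rw [h1, h2, h3, smul_add, hconstr, smul_smul]
    rw [div_mul_cancel₀ L (by norm_num : (2:ℝ) ≠ 0)]
    rw [hLu]
    abel
  refine ⟨(1 / 2) * ∫ x in stripset, q x.2 (cols (Fb' + Dalpha φ' x) (L • D3 φ' x)),
    ⟨L, hL, φ', hSob', hPer', hconstr', rfl⟩, ?_⟩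
  -- now the energy estimate
  have hAeq : ∀ x ∈ stripset,
      cols (Fb' + Dalpha φ' x) (L • D3 φ' x) = Amap Fb L φ x + Emat := by
    intro x hx
    rw [hDa' x hx, hD3' x hx]
    have h1 : Fb' + Dalpha φ x = (Fb + Dalpha φ x) + (Fb' - Fb) := by abel
    have h2 : L • (D3 φ x + u) = (L • D3 φ x) + (z' - z) := by
      rw [smul_add, hLu]
    rw [h1, h2, cols_add]
    rfl
  have h2p : (0 : ℝ) ≤ 2 ^ p := Real.rpow_nonneg (by norm_num) p
  have hptw : ∀ x ∈ stripset,
      q x.2 (cols (Fb' + Dalpha φ' x) (L • D3 φ' x)) ≤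
      q x.2 (Amap Fb L φ x) +
        (β * δ) * ((3 + 2 ^ p) + (1 + 2 ^ p) * mnorm33 (Amap Fb L φ x) ^ p) := by
    intro x hx
    rw [hAeq x hx]
    set A : M33 := Amap Fb L φ x with hA
    have hAnn : 0 ≤ mnorm33 A := mnorm33_nonneg _
    have hdiff := hl x.2 (A + Emat) A
    have hsub : (A + Emat) - A = Emat := by abel
    rw [hsub] at hdiff
    have hAE : mnorm33 (A + Emat) ≤ mnorm33 A + 1 :=
      (mnorm33_add_le A Emat).trans (by linarith)
    have hAEp : mnorm33 (A + Emat) ^ p ≤ 2 ^ p * (mnorm33 A ^ p + 1) := by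
      calc mnorm33 (A + Emat) ^ p ≤ (mnorm33 A + 1) ^ p :=
            Real.rpow_le_rpow (mnorm33_nonneg _) hAE (by linarith)
        _ ≤ 2 ^ p * (mnorm33 A ^ p + 1 ^ p) :=
            rpow_add_le (by linarith) hAnn (by norm_num)
        _ = 2 ^ p * (mnorm33 A ^ p + 1) := by rw [Real.one_rpow]
    have hX : 1 + mnorm33 (A + Emat) ^ (p - 1) + mnorm33 A ^ (p - 1) ≤
        (3 + 2 ^ p) + (1 + 2 ^ p) * mnorm33 A ^ p := by
      have e1 := rpow_sub_one_le hp (mnorm33_nonneg (A + Emat))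
      have e2 := rpow_sub_one_le hp hAnn
      have e3 : 0 ≤ mnorm33 A ^ p := Real.rpow_nonneg hAnn p
      linarith
    have hXnn : 0 ≤ 1 + mnorm33 (A + Emat) ^ (p - 1) + mnorm33 A ^ (p - 1) := by
      have := Real.rpow_nonneg (mnorm33_nonneg (A + Emat)) (p - 1)
      have := Real.rpow_nonneg hAnn (p - 1)
      linarith
    have hbound : |q x.2 (A + Emat) - q x.2 A| ≤
        (β * δ) * ((3 + 2 ^ p) + (1 + 2 ^ p) * mnorm33 A ^ p) := by
      refine hdiff.trans ?_
      calc β * (1 + mnorm33 (A + Emat) ^ (p - 1) + mnorm33 A ^ (p - 1)) * δ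
          ≤ β * ((3 + 2 ^ p) + (1 + 2 ^ p) * mnorm33 A ^ p) * δ := by
            apply mul_le_mul_of_nonneg_right _ hδ0
            exact mul_le_mul_of_nonneg_left hX hβ.le
        _ = (β * δ) * ((3 + 2 ^ p) + (1 + 2 ^ p) * mnorm33 A ^ p) := by ring
    have := abs_le.mp hbound
    linarith [this.2]
  -- integrate the pointwise bound
  have hIq := integrable_qA hp hβ hβ' hm hg hl Fb L hSob
  have hIpow := integrable_Amap_rpow hp Fb L hSob
  have hIq' : Integrable (fun x => q x.2 (cols (Fb' + Dalpha φ' x) (L • D3 φ' x)))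
      (volume.restrict stripset) := integrable_qA hp hβ hβ' hm hg hl Fb' L hSob'
  have hI2 : Integrable
      (fun x => (3 + 2 ^ p) + (1 + 2 ^ p) * mnorm33 (Amap Fb L φ x) ^ p)
      (volume.restrict stripset) :=
    (integrable_const _).add (hIpow.const_mul _)
  have hIRHS : Integrable (fun x => q x.2 (Amap Fb L φ x) +
      (β * δ) * ((3 + 2 ^ p) + (1 + 2 ^ p) * mnorm33 (Amap Fb L φ x) ^ p))
      (volume.restrict stripset) := hIq.add (hI2.const_mul _)
  have hintle : (∫ x in stripset, q x.2 (cols (Fb' + Dalpha φ' x) (L • D3 φ' x))) ≤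
      ∫ x in stripset, (q x.2 (Amap Fb L φ x) +
        (β * δ) * ((3 + 2 ^ p) + (1 + 2 ^ p) * mnorm33 (Amap Fb L φ x) ^ p)) :=
    setIntegral_mono_on hIq' hIRHS measurableSet_stripset hptw
  have hsplit : (∫ x in stripset, (q x.2 (Amap Fb L φ x) +
      (β * δ) * ((3 + 2 ^ p) + (1 + 2 ^ p) * mnorm33 (Amap Fb L φ x) ^ p))) =
      (∫ x in stripset, q x.2 (Amap Fb L φ x)) +
      (β * δ) * ((3 + 2 ^ p) * 2 +
        (1 + 2 ^ p) * ∫ x in stripset, mnorm33 (Amap Fb L φ x) ^ p) := by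
    rw [integral_add hIq (hI2.const_mul _), MeasureTheory.integral_const_mul]
    congr 1
    rw [integral_add (integrable_const _) (hIpow.const_mul _), MeasureTheory.integral_const_mul,
      setIntegral_const, measureReal_def, volume_stripset_toReal, smul_eq_mul]
    ring
  set I : ℝ := ∫ x in stripset, mnorm33 (Amap Fb L φ x) ^ p with hI
  set J : ℝ := ∫ x in stripset, q x.2 (Amap Fb L φ x) with hJ
  have hJc : J = 2 * c := by
    have : c = (1 / 2) * J := by
      rw [hceq, hJ]; rfl
    linarith
  have hInn : 0 ≤ I := by
    rw [hI]
    apply setIntegral_nonneg measurableSet_stripset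
    intro x _
    exact Real.rpow_nonneg (mnorm33_nonneg _) p
  have hcoer : β' * I ≤ J := coercive_int hp hβ hβ' hm hg hl Fb L hSob
  have hI2c : I ≤ 2 * c / β' := by
    rw [le_div_iff₀ hβ', mul_comm]
    linarith
  have hprod : (β * δ) * ((1 + 2 ^ p) * I) ≤ (β * δ) * ((1 + 2 ^ p) * (2 * c / β')) := by
    apply mul_le_mul_of_nonneg_left _ (by positivity)
    exact mul_le_mul_of_nonneg_left hI2c (by linarith)
  have heq2 : (β * δ) * ((1 + 2 ^ p) * (2 * c / β')) =
      2 * (β * δ * (((1 + 2 ^ p) / β') * c)) := by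
    field_simp
  have hfin : (∫ x in stripset, q x.2 (cols (Fb' + Dalpha φ' x) (L • D3 φ' x))) ≤
      2 * c + 2 * (β * δ * ((3 + 2 ^ p) + ((1 + 2 ^ p) / β') * c)) := by
    have hmain := hintle.trans (le_of_eq hsplit)
    have e3 : (β * δ) * ((3 + 2 ^ p) * 2 + (1 + 2 ^ p) * I) =
        2 * ((β * δ) * (3 + 2 ^ p)) + (β * δ) * ((1 + 2 ^ p) * I) := by ring
    have e4 : 2 * c + 2 * (β * δ * ((3 + 2 ^ p) + ((1 + 2 ^ p) / β') * c)) =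
        2 * c + 2 * ((β * δ) * (3 + 2 ^ p)) + 2 * (β * δ * (((1 + 2 ^ p) / β') * c)) := by ring
    rw [e4]
    linarith [hmain, hprod, heq2, hJc]
  linarith
end Part7

namespace Part8
open Aux7 Part2 Part3 Part4 Part5 Part6 Part7

variable {p β β' : ℝ} {q : ℝ → M33 → ℝ}

lemma le_of_forall_eps {a b : ℝ} (h : ∀ ε > 0, a ≤ b + ε) : a ≤ b := by
  by_contra hc
  push_neg at hc
  have := h ((a - b) / 2) (by linarith)
  linarith

lemma bddBelow_QstarSet (hβ' : 0 < β')
    (hg : ∀ t F, β' * mnorm33 F ^ p ≤ q t F ∧ q t F ≤ β * (1 + mnorm33 F ^ p))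
    (Fb : M32) (z : E3) : BddBelow (QstarSet q p Fb z) :=
  ⟨0, fun _c hc => mem_nonneg hβ' hg hc⟩

lemma qstar_nonneg (hβ' : 0 < β')
    (hg : ∀ t F, β' * mnorm33 F ^ p ≤ q t F ∧ q t F ≤ β * (1 + mnorm33 F ^ p))
    (Fb : M32) (z : E3) : 0 ≤ Qstar q p Fb z :=
  Real.sInf_nonneg fun _c hc => mem_nonneg hβ' hg hc

lemma qstar_upper (hp : 1 < p) (hβ : 0 < β) (hβ' : 0 < β')
    (hm : ∀ F, Measurable fun t => q t F)
    (hg : ∀ t F, β' * mnorm33 F ^ p ≤ q t F ∧ q t F ≤ β * (1 + mnorm33 F ^ p))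
    (Fb : M32) (z : E3) :
    Qstar q p Fb z ≤ β * (1 + mnorm33 (cols Fb z) ^ p) := by
  obtain ⟨c, hcmem, hcle⟩ := affine_competitor hp hβ hβ' hm hg Fb z
  exact (csInf_le (bddBelow_QstarSet hβ' hg Fb z) hcmem).trans hcle

lemma sInf_est (hp : 1 < p) (hβ : 0 < β) (hβ' : 0 < β')
    (hm : ∀ F, Measurable fun t => q t F)
    (hg : ∀ t F, β' * mnorm33 F ^ p ≤ q t F ∧ q t F ≤ β * (1 + mnorm33 F ^ p))
    (hl : ∀ t F₁ F₂, |q t F₁ - q t F₂| ≤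
      β * (1 + mnorm33 F₁ ^ (p - 1) + mnorm33 F₂ ^ (p - 1)) * mnorm33 (F₁ - F₂))
    (Fb Fb' : M32) (z z' : E3)
    (hδ1 : mnorm33 (cols (Fb' - Fb) (z' - z)) ≤ 1) :
    Qstar q p Fb' z' ≤ Qstar q p Fb z + β * mnorm33 (cols (Fb' - Fb) (z' - z)) *
      ((3 + 2 ^ p) + ((1 + 2 ^ p) / β') * Qstar q p Fb z) := by
  have h2p : (0 : ℝ) ≤ 2 ^ p := Real.rpow_nonneg (by norm_num) p
  have hδ0 : 0 ≤ mnorm33 (cols (Fb' - Fb) (z' - z)) := mnorm33_nonneg _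
  set δ := mnorm33 (cols (Fb' - Fb) (z' - z)) with hδdef
  set f := Qstar q p Fb z with hf
  set M : ℝ := β * δ * ((1 + 2 ^ p) / β') with hM
  have hMnn : 0 ≤ M := by
    rw [hM]
    have : (0:ℝ) ≤ (1 + 2 ^ p) / β' := by positivity
    positivity
  have h1M : (0:ℝ) < 1 + M := by linarith
  rw [← sub_le_iff_le_add'] at *
  refine le_of_forall_eps fun ε hε => ?_
  set ε' : ℝ := ε / (1 + M) with hε'
  have hε'0 : 0 < ε' := by positivity
  have hne : (QstarSet q p Fb z).Nonempty := by
    obtain ⟨c, hcmem, _⟩ := affine_competitor hp hβ hβ' hm hg Fb z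
    exact ⟨c, hcmem⟩
  obtain ⟨c, hcmem, hclt⟩ := Real.lt_sInf_add_pos hne hε'0
  obtain ⟨c', hc'mem, hc'le⟩ := key hp hβ hβ' hm hg hl Fb Fb' z z' hδ1 hcmem
  have h1 : Qstar q p Fb' z' ≤ c' := csInf_le (bddBelow_QstarSet hβ' hg Fb' z') hc'mem
  have hcf : c < f + ε' := hclt
  have e_c : β * δ * ((3 + 2 ^ p) + (1 + 2 ^ p) / β' * c) =
      β * δ * (3 + 2 ^ p) + M * c := by rw [hM]; ring
  have e_f : β * δ * ((3 + 2 ^ p) + (1 + 2 ^ p) / β' * f) =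
      β * δ * (3 + 2 ^ p) + M * f := by rw [hM]; ring
  have hMc : M * c ≤ M * f + M * ε' := by
    have := mul_le_mul_of_nonneg_left hcf.le hMnn
    nlinarith
  have hεe : ε' + M * ε' = ε := by
    have h := div_mul_cancel₀ ε h1M.ne'
    calc ε' + M * ε' = ε' * (1 + M) := by ring
      _ = ε := by rw [hε']; exact h
  have hgoal : Qstar q p Fb' z' ≤ f + β * δ * ((3 + 2 ^ p) + (1 + 2 ^ p) / β' * f) + ε := by
    calc Qstar q p Fb' z' ≤ c' := h1
      _ ≤ c + β * δ * ((3 + 2 ^ p) + (1 + 2 ^ p) / β' * c) := hc'le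
      _ = c + β * δ * (3 + 2 ^ p) + M * c := by rw [e_c]; ring
      _ ≤ (f + ε') + β * δ * (3 + 2 ^ p) + (M * f + M * ε') := by linarith
      _ = f + β * δ * ((3 + 2 ^ p) + (1 + 2 ^ p) / β' * f) + (ε' + M * ε') := by
          rw [e_f]; ring
      _ = f + β * δ * ((3 + 2 ^ p) + (1 + 2 ^ p) / β' * f) + ε := by rw [hεe]
  linarith

lemma delta_symm (Fb Fb' : M32) (z z' : E3) :
    mnorm33 (cols (Fb - Fb') (z - z')) = mnorm33 (cols (Fb' - Fb) (z' - z)) := by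
  have h1 : Fb - Fb' = -(Fb' - Fb) := by abel
  have h2 : z - z' = -(z' - z) := by abel
  rw [h1, h2, cols_neg, mnorm33_neg]

end Part8

namespace Part9
open Aux7 Part2 Part3 Part4 Part5 Part6 Part7 Part8

variable {p β β' : ℝ} {q : ℝ → M33 → ℝ}

lemma cols_zero : cols (0 : M32) (0 : E3) = (0 : M33) := by
  ext i j
  rw [cols_apply]
  split <;> simp

lemma cols_decomp (P P' : M32 × E3) :
    cols P'.1 P'.2 = cols P.1 P.2 + cols (P'.1 - P.1) (P'.2 - P.2) := by
  have e1 : P.1 + (P'.1 - P.1) = P'.1 := by abel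
  have e2 : P.2 + (P'.2 - P.2) = P'.2 := by abel
  rw [← cols_add, e1, e2]

lemma continuous_g (P : M32 × E3) :
    Continuous fun P' : M32 × E3 => mnorm33 (cols (P'.1 - P.1) (P'.2 - P.2)) := by
  apply continuous_mnorm33.comp
  apply continuous_pi
  intro i
  apply continuous_pi
  intro j
  by_cases hj : (j : ℕ) < 2
  · have : (fun P' : M32 × E3 => cols (P'.1 - P.1) (P'.2 - P.2) i j) =
        fun P' : M32 × E3 => P'.1 i ⟨j, hj⟩ - P.1 i ⟨j, hj⟩ := by
      funext P'
      rw [cols_apply, dif_pos hj]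
      rfl
    rw [this]
    exact ((continuous_fst.matrix_elem i _)).sub
      continuous_const
  · have : (fun P' : M32 × E3 => cols (P'.1 - P.1) (P'.2 - P.2) i j) =
        fun P' : M32 × E3 => P'.2 i - P.2 i := by
      funext P'
      rw [cols_apply, dif_neg hj]
      rfl
    rw [this]
    exact (((continuous_apply i).comp continuous_snd)).sub continuous_const

lemma main (hp : 1 < p) (hβ : 0 < β) (hβ' : 0 < β')
    (hm : ∀ F, Measurable fun t => q t F)
    (hg : ∀ t F, β' * mnorm33 F ^ p ≤ q t F ∧ q t F ≤ β * (1 + mnorm33 F ^ p))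
    (hl : ∀ t F₁ F₂, |q t F₁ - q t F₂| ≤
      β * (1 + mnorm33 F₁ ^ (p - 1) + mnorm33 F₂ ^ (p - 1)) * mnorm33 (F₁ - F₂)) :
    Continuous fun Fz : M32 × E3 => Qstar q p Fz.1 Fz.2 := by
  have h2p : (0 : ℝ) ≤ 2 ^ p := Real.rpow_nonneg (by norm_num) p
  rw [continuous_iff_continuousAt]
  intro P
  set g : M32 × E3 → ℝ := fun P' => mnorm33 (cols (P'.1 - P.1) (P'.2 - P.2)) with hgdef
  have h00 : mnorm33 (cols (P.1 - P.1) (P.2 - P.2)) = 0 := by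
    rw [sub_self, sub_self, cols_zero, mnorm33_zero]
  have hg0 : g P = 0 := h00
  have hgnn : ∀ P', 0 ≤ g P' := fun P' => mnorm33_nonneg _
  have htend : Tendsto g (𝓝 P) (𝓝 0) := by
    have h := (continuous_g P).tendsto P
    rw [h00] at h
    exact h
  -- uniform bound B on Qstar in the unit g-ball around P
  set N : ℝ := mnorm33 (cols P.1 P.2) with hN
  set B : ℝ := β * (1 + (N + 1) ^ p) with hB
  have hbound : ∀ P' : M32 × E3, g P' ≤ 1 → Qstar q p P'.1 P'.2 ≤ B := by
    intro P' hP'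
    have h1 : mnorm33 (cols P'.1 P'.2) ≤ N + 1 := by
      rw [cols_decomp P P']
      exact (mnorm33_add_le _ _).trans (by rw [hN]; exact add_le_add le_rfl hP')
    have h2 : mnorm33 (cols P'.1 P'.2) ^ p ≤ (N + 1) ^ p :=
      Real.rpow_le_rpow (mnorm33_nonneg _) h1 (by linarith)
    refine (qstar_upper hp hβ hβ' hm hg P'.1 P'.2).trans ?_
    rw [hB]
    have := mul_le_mul_of_nonneg_left h2 hβ.le
    linarith
  have hNnn : 0 ≤ N := mnorm33_nonneg _
  have hBnn : 0 ≤ B := by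
    rw [hB]
    have h1 : (0:ℝ) ≤ (N + 1) ^ p := Real.rpow_nonneg (by linarith) p
    nlinarith
  have hK2 : (0:ℝ) ≤ (1 + 2 ^ p) / β' := div_nonneg (by linarith) hβ'.le
  set C : ℝ := β * ((3 + 2 ^ p) + ((1 + 2 ^ p) / β') * B) with hC
  have hCnn : 0 ≤ C := by
    rw [hC]
    have h1 : (0:ℝ) ≤ (1 + 2 ^ p) / β' * B := mul_nonneg hK2 hBnn
    have h2 : (0:ℝ) ≤ (3 + 2 ^ p) + (1 + 2 ^ p) / β' * B := by linarith
    exact mul_nonneg hβ.le h2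
  -- two-sided estimate
  have hest : ∀ P' : M32 × E3, g P' ≤ 1 →
      |Qstar q p P'.1 P'.2 - Qstar q p P.1 P.2| ≤ C * g P' := by
    intro P' hP'
    have hfP : Qstar q p P.1 P.2 ≤ B := hbound P (by rw [hg0]; norm_num)
    have hfP' : Qstar q p P'.1 P'.2 ≤ B := hbound P' hP'
    have hfPnn := qstar_nonneg hβ' hg P.1 P.2
    have hfP'nn := qstar_nonneg hβ' hg P'.1 P'.2
    have h1 := sInf_est hp hβ hβ' hm hg hl P.1 P'.1 P.2 P'.2 hP'
    have hsymm : mnorm33 (cols (P.1 - P'.1) (P.2 - P'.2)) = g P' := delta_symm P.1 P'.1 P.2 P'.2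
    have h2 := sInf_est hp hβ hβ' hm hg hl P'.1 P.1 P'.2 P.2 (by rw [hsymm]; exact hP')
    rw [hsymm] at h2
    have e1 : β * g P' * ((3 + 2 ^ p) + (1 + 2 ^ p) / β' * Qstar q p P.1 P.2) ≤ C * g P' := by
      rw [hC]
      have hx : (3 + 2 ^ p) + (1 + 2 ^ p) / β' * Qstar q p P.1 P.2 ≤
          (3 + 2 ^ p) + (1 + 2 ^ p) / β' * B := by
        have := mul_le_mul_of_nonneg_left hfP hK2
        linarith
      nlinarith [mul_le_mul_of_nonneg_left hx (mul_nonneg hβ.le (hgnn P'))]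
    have e2 : β * g P' * ((3 + 2 ^ p) + (1 + 2 ^ p) / β' * Qstar q p P'.1 P'.2) ≤ C * g P' := by
      rw [hC]
      have hx : (3 + 2 ^ p) + (1 + 2 ^ p) / β' * Qstar q p P'.1 P'.2 ≤
          (3 + 2 ^ p) + (1 + 2 ^ p) / β' * B := by
        have := mul_le_mul_of_nonneg_left hfP' hK2
        linarith
      nlinarith [mul_le_mul_of_nonneg_left hx (mul_nonneg hβ.le (hgnn P'))]
    rw [abs_le]
    constructor
    · linarith
    · linarith
  rw [ContinuousAt, tendsto_iff_dist_tendsto_zero]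
  have hev : ∀ᶠ P' in 𝓝 P, g P' < 1 := htend (Iio_mem_nhds (by norm_num))
  have hb1 : ∀ᶠ P' in 𝓝 P, dist (Qstar q p P'.1 P'.2) (Qstar q p P.1 P.2) ≤ C * g P' := by
    filter_upwards [hev] with P' hP'
    rw [Real.dist_eq]
    exact hest P' hP'.le
  have hb2 : Tendsto (fun P' => C * g P') (𝓝 P) (𝓝 0) := by
    have h := htend.const_mul C
    simpa using h
  exact squeeze_zero' (Filter.Eventually.of_forall fun _ => dist_nonneg) hb1 hb2
end Part9


/-- For a.e. x₀, the map (F̄,z) ↦ Q*W(x₀;F̄|z) is continuous, where the integrand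
QW(x₀;·,·) satisfies p-growth, p-coercivity and the quasiconvex Lipschitz-type
estimate. -/
theorem stmt7 (p β β' : ℝ) (hp : 1 < p) (hβ : 0 < β) (hβ' : 0 < β')
    (ω : Set E2) (hω : IsOpen ω) (hωb : Bornology.IsBounded ω)
    (QW : E2 → ℝ → M33 → ℝ)
    (hmeas : ∀ᵐ x₀ ∂volume.restrict ω, ∀ F, Measurable fun t => QW x₀ t F)
    (hgrowth : ∀ᵐ x₀ ∂volume.restrict ω, ∀ t F,
      β' * mnorm33 F ^ p ≤ QW x₀ t F ∧ QW x₀ t F ≤ β * (1 + mnorm33 F ^ p))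
    (hlip : ∀ᵐ x₀ ∂volume.restrict ω, ∀ t F₁ F₂,
      |QW x₀ t F₁ - QW x₀ t F₂| ≤
        β * (1 + mnorm33 F₁ ^ (p - 1) + mnorm33 F₂ ^ (p - 1)) * mnorm33 (F₁ - F₂)) :
    ∀ᵐ x₀ ∂volume.restrict ω,
      Continuous fun Fz : M32 × E3 => Qstar (QW x₀) p Fz.1 Fz.2 := by
  filter_upwards [hmeas, hgrowth, hlip] with x₀ h1 h2 h3
  exact Part9.main hp hβ hβ' h1 h2 h3
end
end

section
/- Let φ ∈ W^{1,p}(Q'×(−1,1);ℝ³) be Q'-periodic in the first two variables (extended by Q'-periodicity to ℝ²×(−1,1)), with 1 < p < ∞. Define φ_n(x_α, x₃) := (1/n) φ(n x_α, x₃). Then for any continuous integrand g : ℝ^{3×3} → ℝ with |g(F)| ≤ β(1+|F|^p), ∫_{Q'×(−1,1)} g(F̄ + D_αφ_n | L n D₃φ_n) dx → ∫_{Q'×(−1,1)} g(F̄ + D_αφ | L D₃φ) dx as n → ∞, for every F̄ ∈ ℝ^{3×2} and L > 0. -/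
open MeasureTheory Filter Topology
open ENNReal

noncomputable section

namespace Stmt12Aux

def Qp : Set E2 := Set.univ.pi fun _ : Fin 2 => Set.Ioo (0:ℝ) 1

lemma measurableSet_Qp : MeasurableSet Qp :=
  MeasurableSet.univ_pi fun _ => measurableSet_Ioo

lemma hyperplane_null (j : Fin 2) (c : ℝ) : volume {y : E2 | y j = c} = 0 := by
  rw [MeasureTheory.volume_pi]
  exact MeasureTheory.Measure.pi_hyperplane (fun _ => (volume : Measure ℝ)) j c

/-- Scaling identity on the unit square for periodic `ℝ≥0∞`-valued functions. -/
lemma lintegral_scale_eq (G : E2 → ℝ≥0∞) (hG : Measurable G)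
    (hper : ∀ (y : E2) (k : Fin 2 → ℤ), G (y + fun j => (k j : ℝ)) = G y)
    (n : ℕ) (hn : 1 ≤ n) :
    ∫⁻ y in Qp, G ((n:ℝ) • y) = ∫⁻ y in Qp, G y := by
  have hn0 : (0:ℝ) < n := by exact_mod_cast Nat.lt_of_lt_of_le Nat.zero_lt_one hn
  set Qn : Set E2 := Set.univ.pi fun _ : Fin 2 => Set.Ioo (0:ℝ) n with hQndef
  have hQn : MeasurableSet Qn := MeasurableSet.univ_pi fun _ => measurableSet_Ioo
  have hmem : ∀ y : E2, ((n:ℝ) • y ∈ Qn ↔ y ∈ Qp) := by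
    intro y
    simp only [Qn, Qp, Set.mem_univ_pi, Set.mem_Ioo, Pi.smul_apply, smul_eq_mul]
    refine forall_congr' fun j => ?_
    constructor
    · rintro ⟨h1, h2⟩
      constructor <;> nlinarith
    · rintro ⟨h1, h2⟩
      constructor <;> nlinarith
  set C : (Fin 2 → Fin n) → Set E2 :=
    fun k => Set.univ.pi fun j => Set.Ioo ((k j : ℕ) : ℝ) (((k j : ℕ) : ℝ) + 1) with hCdef
  have hC : ∀ k, MeasurableSet (C k) := fun k => MeasurableSet.univ_pi fun _ => measurableSet_Ioo
  -- a.e. decomposition of Qn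
  have hsub : (⋃ k : Fin 2 → Fin n, C k) ⊆ Qn := by
    intro y hy
    rcases Set.mem_iUnion.1 hy with ⟨k, hk⟩
    refine Set.mem_univ_pi.2 fun j => ?_
    have h1 := (Set.mem_univ_pi.1 hk) j
    have h2 : ((k j : ℕ) : ℝ) ≥ 0 := Nat.cast_nonneg _
    have h3 : ((k j : ℕ) : ℝ) + 1 ≤ n := by
      have := (k j).2
      have : ((k j : ℕ) : ℝ) + 1 ≤ ((n : ℕ) : ℝ) := by exact_mod_cast Nat.succ_le_of_lt this
      simpa using this
    exact ⟨by linarith [h1.1], by linarith [h1.2]⟩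
  have hae : Qn =ᵐ[volume] ⋃ k : Fin 2 → Fin n, C k := by
    rw [MeasureTheory.ae_eq_set]
    constructor
    · have hNnull : volume (⋃ (j : Fin 2), ⋃ (m : ℕ), ⋃ (_ : m ≤ n), {y : E2 | y j = (m:ℝ)}) = 0 :=
        measure_iUnion_null fun j => measure_iUnion_null fun m => measure_iUnion_null fun _ =>
          hyperplane_null j m
      refine measure_mono_null ?_ hNnull
      · intro y hy
        rcases hy with ⟨hyQn, hyU⟩
        by_contra hN
        simp only [Set.mem_iUnion, not_exists, Set.mem_setOf_eq] at hN
        apply hyU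
        have hb : ∀ j : Fin 2, (0:ℝ) < y j ∧ y j < n := fun j => Set.mem_univ_pi.1 hyQn j
        have hfl : ∀ j, 0 ≤ ⌊y j⌋ := fun j => Int.floor_nonneg.2 (hb j).1.le
        have hfl2 : ∀ j, ⌊y j⌋ < (n:ℤ) := fun j => Int.floor_lt.2 (by exact_mod_cast (hb j).2)
        have hklt : ∀ j, (⌊y j⌋).toNat < n := fun j => by
          have := hfl j; have := hfl2 j; omega
        refine Set.mem_iUnion.2 ⟨fun j => ⟨(⌊y j⌋).toNat, hklt j⟩, ?_⟩
        refine Set.mem_univ_pi.2 fun j => ?_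
        have hcast : (((⌊y j⌋).toNat : ℕ) : ℝ) = ((⌊y j⌋ : ℤ) : ℝ) := by
          exact_mod_cast congrArg (fun z : ℤ => (z : ℝ)) (Int.toNat_of_nonneg (hfl j))
        have hne : y j ≠ (((⌊y j⌋).toNat : ℕ) : ℝ) := hN j _ (le_of_lt (hklt j))
        constructor
        · rw [hcast]
          rcases lt_or_eq_of_le (Int.floor_le (y j)) with h | h
          · exact h
          · exact absurd (by rw [← hcast] at h; exact h.symm) hne
        · rw [hcast]
          exact Int.lt_floor_add_one (y j)
    · rw [Set.diff_eq_empty.2 hsub]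
      exact measure_empty
  -- translation invariance on each cell
  have htrans : ∀ k : Fin 2 → Fin n, ∫⁻ z in C k, G z = ∫⁻ y in Qp, G y := by
    intro k
    set vk : E2 := fun j => ((k j : ℕ) : ℝ) with hvk
    have h3 : ∀ y : E2, (C k).indicator G (y + vk) = Qp.indicator G y := by
      intro y
      have hmem' : y + vk ∈ C k ↔ y ∈ Qp := by
        simp only [C, Qp, Set.mem_univ_pi, Set.mem_Ioo, Pi.add_apply, vk]
        refine forall_congr' fun j => ?_
        constructor
        · rintro ⟨h1, h2⟩; exact ⟨by linarith, by linarith⟩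
        · rintro ⟨h1, h2⟩; exact ⟨by linarith, by linarith⟩
      have hGy : G (y + vk) = G y := by
        have h := hper y (fun j => ((k j : ℕ) : ℤ))
        have : (fun j => (((k j : ℕ) : ℤ) : ℝ)) = vk := by
          funext j; push_cast; rfl
        rwa [this] at h
      by_cases hy : y ∈ Qp
      · rw [Set.indicator_of_mem (hmem'.2 hy), Set.indicator_of_mem hy, hGy]
      · rw [Set.indicator_of_notMem (fun hc => hy (hmem'.1 hc)), Set.indicator_of_notMem hy]
    calc ∫⁻ z in C k, G z = ∫⁻ z, (C k).indicator G z := (lintegral_indicator (hC k) G).symm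
      _ = ∫⁻ y, (C k).indicator G (y + vk) :=
        (lintegral_add_right_eq_self (fun z => (C k).indicator G z) vk).symm
      _ = ∫⁻ y, Qp.indicator G y := by exact lintegral_congr h3
      _ = ∫⁻ y in Qp, G y := lintegral_indicator measurableSet_Qp G
  -- main computation
  have hmap := Measure.map_addHaar_smul (volume : Measure E2) (ne_of_gt hn0)
  have hfr : Module.finrank ℝ E2 = 2 := Module.finrank_fin_fun ℝ
  have hkey : ∀ y : E2, Qp.indicator (fun y => G ((n:ℝ) • y)) y = Qn.indicator G ((n:ℝ) • y) := by
    intro y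
    by_cases hy : y ∈ Qp
    · rw [Set.indicator_of_mem hy, Set.indicator_of_mem ((hmem y).2 hy)]
    · rw [Set.indicator_of_notMem hy, Set.indicator_of_notMem (fun hc => hy ((hmem y).1 hc))]
  have hsum : ∫⁻ z in Qn, G z = ((n:ℝ≥0∞))^2 * ∫⁻ y in Qp, G y := by
    rw [setLIntegral_congr hae, lintegral_iUnion hC (by
      intro k k' hkk'
      rw [Function.onFun, Set.disjoint_left]
      intro y hy hy'
      apply hkk'
      funext j
      have h1 := Set.mem_univ_pi.1 hy j
      have h2 := Set.mem_univ_pi.1 hy' j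
      have : (k j : ℕ) = (k' j : ℕ) := by
        have hA : ((k j : ℕ) : ℝ) < ((k' j : ℕ) : ℝ) + 1 := by linarith [h1.1, h2.2]
        have hB : ((k' j : ℕ) : ℝ) < ((k j : ℕ) : ℝ) + 1 := by linarith [h2.1, h1.2]
        have hA' : (k j : ℕ) < (k' j : ℕ) + 1 := by exact_mod_cast hA
        have hB' : (k' j : ℕ) < (k j : ℕ) + 1 := by exact_mod_cast hB
        omega
      exact Fin.ext this) G]
    rw [tsum_congr htrans, tsum_fintype, Finset.sum_const, nsmul_eq_mul]
    congr 1
    rw [Finset.card_univ, Fintype.card_fun]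
    push_cast
    simp
  calc ∫⁻ y in Qp, G ((n:ℝ) • y)
      = ∫⁻ y, Qp.indicator (fun y => G ((n:ℝ) • y)) y :=
        (lintegral_indicator measurableSet_Qp _).symm
    _ = ∫⁻ y, Qn.indicator G ((n:ℝ) • y) := lintegral_congr hkey
    _ = ∫⁻ z, Qn.indicator G z ∂(Measure.map (fun y : E2 => (n:ℝ) • y) volume) :=
        (lintegral_map (hG.indicator hQn) (measurable_const_smul _)).symm
    _ = ENNReal.ofReal |((n:ℝ) ^ Module.finrank ℝ E2)⁻¹| * ∫⁻ z, Qn.indicator G z := by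
        rw [hmap, lintegral_smul_measure, smul_eq_mul]
    _ = ENNReal.ofReal (((n:ℝ)^2)⁻¹) * ∫⁻ z in Qn, G z := by
        rw [lintegral_indicator hQn G, hfr, abs_of_pos (by positivity)]
    _ = ∫⁻ y in Qp, G y := by
        rw [hsum, ENNReal.ofReal_inv_of_pos (by positivity), ENNReal.ofReal_pow (by positivity),
          ENNReal.ofReal_natCast, ← mul_assoc, ENNReal.inv_mul_cancel, one_mul]
        · positivity
        · exact ENNReal.pow_ne_top (ENNReal.natCast_ne_top n)

end Stmt12Aux

namespace Stmt12Aux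

lemma stripset_eq : stripset = Qp ×ˢ Set.Ioo (-1:ℝ) 1 := by
  ext x
  simp [stripset, Qp, Set.mem_prod, Set.mem_univ_pi]

lemma measurableSet_stripset : MeasurableSet stripset := by
  rw [stripset_eq]
  exact measurableSet_Qp.prod measurableSet_Ioo

lemma volume_stripset : volume stripset = 2 := by
  rw [stripset_eq, Measure.volume_eq_prod, Measure.prod_prod]
  have h1 : volume Qp = 1 := by
    rw [Qp, volume_pi_pi]
    simp [Real.volume_Ioo]
  rw [h1, Real.volume_Ioo, one_mul]
  norm_num

/-- Scaling identity on the strip for periodic `ℝ≥0∞`-valued functions. -/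
lemma lintegral_scale_eq_strip (f : E2 × ℝ → ℝ≥0∞) (hf : Measurable f)
    (hper : ∀ (x : E2 × ℝ) (k : Fin 2 → ℤ), f (x.1 + fun j => (k j : ℝ), x.2) = f x)
    (n : ℕ) (hn : 1 ≤ n) :
    ∫⁻ x in stripset, f ((n:ℝ) • x.1, x.2) = ∫⁻ x in stripset, f x := by
  have hres : (volume : Measure (E2 × ℝ)).restrict (Qp ×ˢ Set.Ioo (-1:ℝ) 1)
      = ((volume : Measure E2).restrict Qp).prod ((volume : Measure ℝ).restrict (Set.Ioo (-1:ℝ) 1)) := by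
    rw [Measure.volume_eq_prod, Measure.prod_restrict]
  rw [stripset_eq, hres]
  have hTm : Measurable (fun x : E2 × ℝ => ((n:ℝ) • x.1, x.2)) :=
    (((measurable_const_smul ((n:ℝ))).comp measurable_fst).prodMk measurable_snd)
  rw [MeasureTheory.lintegral_prod (fun z : E2 × ℝ => f ((n:ℝ) • z.1, z.2)) ((hf.comp hTm).aemeasurable),
    MeasureTheory.lintegral_prod f hf.aemeasurable]
  set G : E2 → ℝ≥0∞ := fun y => ∫⁻ t in Set.Ioo (-1:ℝ) 1, f (y, t) with hGdef
  have hG : Measurable G := hf.lintegral_prod_right'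
  have hGper : ∀ (y : E2) (k : Fin 2 → ℤ), G (y + fun j => (k j : ℝ)) = G y := by
    intro y k
    exact lintegral_congr fun t => hper (y, t) k
  exact lintegral_scale_eq G hG hGper n hn

end Stmt12Aux

namespace Stmt12Aux

lemma key_aux (h : E2 × ℝ → ℝ) (hmeas : Measurable h)
    (hper : ∀ (x : E2 × ℝ) (k : Fin 2 → ℤ), h (x.1 + fun j => (k j : ℝ), x.2) = h x)
    (hint : IntegrableOn h stripset volume) (n : ℕ) (hn : 1 ≤ n) :
    ∫ x in stripset, h ((n:ℝ) • x.1, x.2) = ∫ x in stripset, h x := by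
  have hTm : Measurable (fun x : E2 × ℝ => ((n:ℝ) • x.1, x.2)) :=
    (((measurable_const_smul ((n:ℝ))).comp measurable_fst).prodMk measurable_snd)
  have hcomp : Measurable (fun x : E2 × ℝ => h ((n:ℝ) • x.1, x.2)) := hmeas.comp hTm
  have hLB : ∀ (f : E2 × ℝ → ℝ≥0∞), Measurable f →
      (∀ (x : E2 × ℝ) (k : Fin 2 → ℤ), f (x.1 + fun j => (k j : ℝ), x.2) = f x) →
      ∫⁻ x in stripset, f ((n:ℝ) • x.1, x.2) = ∫⁻ x in stripset, f x :=
    fun f hf hpf => lintegral_scale_eq_strip f hf hpf n hn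
  have hint2 : IntegrableOn (fun x : E2 × ℝ => h ((n:ℝ) • x.1, x.2)) stripset volume := by
    refine ⟨hcomp.aestronglyMeasurable, ?_⟩
    have hnn := hLB (fun x => (‖h x‖₊ : ℝ≥0∞)) (hmeas.nnnorm.coe_nnreal_ennreal)
      (fun x k => by simp only [hper x k])
    have h2 := hint.2
    rw [HasFiniteIntegral] at h2 ⊢
    simp only [enorm_eq_nnnorm] at h2 ⊢
    rwa [hnn]
  rw [MeasureTheory.integral_eq_lintegral_pos_part_sub_lintegral_neg_part hint2,
    MeasureTheory.integral_eq_lintegral_pos_part_sub_lintegral_neg_part hint]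
  have e1 := hLB (fun x => ENNReal.ofReal (h x)) (hmeas.ennreal_ofReal)
    (fun x k => by simp only [hper x k])
  have e2 := hLB (fun x => ENNReal.ofReal (-h x)) ((hmeas.neg).ennreal_ofReal)
    (fun x k => by simp only [hper x k])
  rw [e1, e2]

lemma rpow_add_le (a b q : ℝ) (ha : 0 ≤ a) (hb : 0 ≤ b) (hq : 0 ≤ q) :
    (a + b) ^ q ≤ 2 ^ q * (a ^ q + b ^ q) := by
  have hmax0 : 0 ≤ max a b := le_max_of_le_left ha
  have h1 : a + b ≤ 2 * max a b := by
    rcases le_total a b with hab | hab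
    · rw [max_eq_right hab]; linarith
    · rw [max_eq_left hab]; linarith
  calc (a + b) ^ q ≤ (2 * max a b) ^ q := Real.rpow_le_rpow (by linarith) h1 hq
    _ = 2 ^ q * (max a b) ^ q := Real.mul_rpow (by norm_num) hmax0
    _ ≤ 2 ^ q * (a ^ q + b ^ q) := by
        have h2 : (max a b) ^ q ≤ a ^ q + b ^ q := by
          rcases le_total a b with hab | hab
          · rw [max_eq_right hab]
            have := Real.rpow_nonneg ha q; linarith
          · rw [max_eq_left hab]
            have := Real.rpow_nonneg hb q; linarith
        have h3 : (0:ℝ) ≤ 2 ^ q := Real.rpow_nonneg (by norm_num) q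
        nlinarith

end Stmt12Aux


/-- Riemann–Lebesgue lemma for the in-plane oscillation φ_n(x_α,x₃) = (1/n)φ(n x_α,x₃):
since D_αφ_n(x) = (D_αφ)(n x_α,x₃) and n D₃φ_n(x) = (D₃φ)(n x_α,x₃), the energies
with continuous p-growth integrand g converge to the energy of φ. -/
theorem stmt12 (p L β : ℝ) (hp : 1 < p) (hL : 0 < L) (hβ : 0 < β)
    (φ : E2 × ℝ → E3) (hper : QPeriodic φ) (hsob : SobOn p φ stripset)
    (hdiff : ∀ x : E2 × ℝ, DifferentiableAt ℝ φ x)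
    (g : M33 → ℝ) (hg : Continuous g) (hgb : ∀ F, |g F| ≤ β * (1 + mnorm33 F ^ p))
    (Fb : M32) :
    Tendsto (fun n : ℕ => ∫ x in stripset,
        g (cols (Fb + Dalpha φ ((n : ℝ) • x.1, x.2)) (L • D3 φ ((n : ℝ) • x.1, x.2))))
      atTop (nhds (∫ x in stripset, g (cols (Fb + Dalpha φ x) (L • D3 φ x)))) := by
  classical
  have hp0 : (0:ℝ) < p := lt_trans one_pos hp
  set h : E2 × ℝ → ℝ := fun x => g (cols (Fb + Dalpha φ x) (L • D3 φ x)) with hh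
  -- measurability of the integrand
  have hg' : Continuous (fun A : Fin 3 → Fin 3 → ℝ => g (Matrix.of A)) := hg
  have hM : Measurable
      (fun x : E2 × ℝ => (fun i j => cols (Fb + Dalpha φ x) (L • D3 φ x) i j :
        Fin 3 → Fin 3 → ℝ)) := by
    refine measurable_pi_lambda _ fun i => measurable_pi_lambda _ fun j => ?_
    by_cases hj : (j : ℕ) < 2
    · simp only [cols, Matrix.of_apply, dif_pos hj, Matrix.add_apply, Dalpha]
      exact measurable_const.add
        ((measurable_pi_apply i).comp (measurable_fderiv_apply_const ℝ φ _))
    · simp only [cols, Matrix.of_apply, dif_neg hj, Pi.smul_apply, D3, smul_eq_mul]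
      exact measurable_const.mul
        ((measurable_pi_apply i).comp (measurable_fderiv_apply_const ℝ φ _))
  have hmeas : Measurable h := hg'.measurable.comp hM
  -- periodicity of the integrand
  have hshift : ∀ (x : E2 × ℝ) (k : Fin 2 → ℤ),
      fderiv ℝ φ ((x.1 + fun j => ((k j : ℤ) : ℝ)), x.2) = fderiv ℝ φ x := by
    intro x k
    set v : E2 × ℝ := ((fun j => ((k j : ℤ) : ℝ)), (0:ℝ)) with hvdef
    have hxv : ((x.1 + fun j => ((k j : ℤ) : ℝ)), x.2) = x + v := by
      simp [v, Prod.ext_iff]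
    have h1 : HasFDerivAt (fun y : E2 × ℝ => φ (y + v)) (fderiv ℝ φ (x + v)) x := by
      have h0 := (hdiff (x + v)).hasFDerivAt.comp x ((hasFDerivAt_id x).add_const v)
      simpa using h0
    have h2 : (fun y : E2 × ℝ => φ (y + v)) = φ := by
      funext y
      calc φ (y + v) = φ ((y.1 + fun j => ((k j : ℤ) : ℝ)), y.2) := by
            rw [show y + v = ((y.1 + fun j => ((k j : ℤ) : ℝ)), y.2) from by
              simp [v, Prod.ext_iff]]
        _ = φ y := hper y k
    rw [h2] at h1
    rw [hxv]
    exact (h1.fderiv).symm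
  have hper' : ∀ (x : E2 × ℝ) (k : Fin 2 → ℤ), h (x.1 + fun j => (k j : ℝ), x.2) = h x := by
    intro x k
    have hD3 : D3 φ (x.1 + fun j => ((k j : ℤ) : ℝ), x.2) = D3 φ x := by
      unfold D3; rw [hshift x k]
    have hDal : Dalpha φ (x.1 + fun j => ((k j : ℤ) : ℝ), x.2) = Dalpha φ x := by
      unfold Dalpha; rw [hshift x k]
    simp only [hh, hDal, hD3]
  -- pointwise growth bound
  set CF : ℝ := ∑ i, ∑ j, |Fb i j| with hCFdef
  have hCF0 : 0 ≤ CF := Finset.sum_nonneg fun _ _ => Finset.sum_nonneg fun _ _ => abs_nonneg _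
  have hfb : ∀ (i : Fin 3) (j : Fin 2), |Fb i j| ≤ CF := by
    intro i j
    have h1 : |Fb i j| ≤ ∑ j', |Fb i j'| :=
      Finset.single_le_sum (f := fun j' => |Fb i j'|) (fun _ _ => abs_nonneg _)
        (Finset.mem_univ j)
    have h2 : (∑ j', |Fb i j'|) ≤ CF :=
      Finset.single_le_sum (f := fun i' => ∑ j', |Fb i' j'|)
        (fun _ _ => Finset.sum_nonneg fun _ _ => abs_nonneg _) (Finset.mem_univ i)
    linarith
  have hDb : ∀ (x : E2 × ℝ) (v : E2 × ℝ), ‖v‖ ≤ 1 → ∀ i : Fin 3,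
      |fderiv ℝ φ x v i| ≤ ‖fderiv ℝ φ x‖ := by
    intro x v hv i
    have h1 : |fderiv ℝ φ x v i| ≤ ‖fderiv ℝ φ x v‖ := by
      rw [← Real.norm_eq_abs]
      exact norm_le_pi_norm (fderiv ℝ φ x v) i
    have h2 : ‖fderiv ℝ φ x v‖ ≤ ‖fderiv ℝ φ x‖ * ‖v‖ := (fderiv ℝ φ x).le_opNorm v
    nlinarith [norm_nonneg (fderiv ℝ φ x)]
  have hv1 : ∀ j : Fin 2, ‖((Pi.single j (1:ℝ) : E2), (0:ℝ))‖ ≤ 1 := by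
    intro j
    rw [Prod.norm_def]
    refine max_le ?_ (by simp)
    rw [Pi.norm_single]
    simp
  have hv2 : ‖((0 : E2), (1:ℝ))‖ ≤ 1 := by
    rw [Prod.norm_def]; simp
  have hentry : ∀ (x : E2 × ℝ) (i : Fin 3) (j : Fin 3),
      |cols (Fb + Dalpha φ x) (L • D3 φ x) i j| ≤ CF + (1 + L) * ‖fderiv ℝ φ x‖ := by
    intro x i j
    have hD0 : 0 ≤ ‖fderiv ℝ φ x‖ := norm_nonneg _
    by_cases hj : (j : ℕ) < 2
    · simp only [cols, Matrix.of_apply, dif_pos hj, Matrix.add_apply, Dalpha]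
      have hA := hDb x _ (hv1 ⟨j, hj⟩) i
      have hB := hfb i ⟨j, hj⟩
      calc |Fb i ⟨j, hj⟩ + fderiv ℝ φ x (Pi.single ⟨j, hj⟩ 1, 0) i|
          ≤ |Fb i ⟨j, hj⟩| + |fderiv ℝ φ x (Pi.single ⟨j, hj⟩ 1, 0) i| := abs_add_le _ _
        _ ≤ CF + (1 + L) * ‖fderiv ℝ φ x‖ := by nlinarith
    · simp only [cols, Matrix.of_apply, dif_neg hj, Pi.smul_apply, D3, smul_eq_mul]
      have hA := hDb x _ hv2 i
      rw [abs_mul, abs_of_pos hL]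
      nlinarith
  have hnorm : ∀ x : E2 × ℝ, mnorm33 (cols (Fb + Dalpha φ x) (L • D3 φ x))
      ≤ 3 * (CF + (1 + L) * ‖fderiv ℝ φ x‖) := by
    intro x
    set t : ℝ := CF + (1 + L) * ‖fderiv ℝ φ x‖ with ht
    have ht0 : 0 ≤ t := by nlinarith [norm_nonneg (fderiv ℝ φ x)]
    have hsq : (∑ i, ∑ j, (cols (Fb + Dalpha φ x) (L • D3 φ x)) i j ^ 2) ≤ 9 * t ^ 2 := by
      have hent : ∀ (i : Fin 3) (j : Fin 3),
          (cols (Fb + Dalpha φ x) (L • D3 φ x)) i j ^ 2 ≤ t ^ 2 := by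
        intro i j
        have := hentry x i j
        have habs := abs_le.1 this
        nlinarith [habs.1, habs.2]
      calc (∑ i, ∑ j, (cols (Fb + Dalpha φ x) (L • D3 φ x)) i j ^ 2)
          ≤ ∑ _i : Fin 3, ∑ _j : Fin 3, t ^ 2 :=
            Finset.sum_le_sum fun i _ => Finset.sum_le_sum fun j _ => hent i j
        _ = 9 * t ^ 2 := by simp [Finset.sum_const]; ring
    calc mnorm33 (cols (Fb + Dalpha φ x) (L • D3 φ x))
        ≤ Real.sqrt (9 * t ^ 2) := Real.sqrt_le_sqrt hsq
      _ = 3 * t := by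
          rw [show (9:ℝ) * t ^ 2 = (3 * t) ^ 2 by ring, Real.sqrt_sq (by linarith)]
  set c1 : ℝ := 2 ^ p * (3 * CF) ^ p with hc1
  set c2 : ℝ := 2 ^ p * (3 * (1 + L)) ^ p with hc2
  have hc10 : 0 ≤ c1 := by
    have := Real.rpow_nonneg (show (0:ℝ) ≤ 2 by norm_num) p
    have := Real.rpow_nonneg (show (0:ℝ) ≤ 3 * CF by linarith) p
    positivity
  have hc20 : 0 ≤ c2 := by positivity
  have hbound : ∀ x : E2 × ℝ, |h x| ≤ β * (1 + c1 + c2 * ‖fderiv ℝ φ x‖ ^ p) := by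
    intro x
    have hD0 : 0 ≤ ‖fderiv ℝ φ x‖ := norm_nonneg _
    have hm0 : 0 ≤ mnorm33 (cols (Fb + Dalpha φ x) (L • D3 φ x)) := Real.sqrt_nonneg _
    have h1 := hgb (cols (Fb + Dalpha φ x) (L • D3 φ x))
    have h2 : mnorm33 (cols (Fb + Dalpha φ x) (L • D3 φ x)) ^ p
        ≤ (3 * CF + 3 * (1 + L) * ‖fderiv ℝ φ x‖) ^ p := by
      have := hnorm x
      exact Real.rpow_le_rpow hm0 (by linarith) hp0.le
    have h4 : (3 * CF + 3 * (1 + L) * ‖fderiv ℝ φ x‖) ^ p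
        ≤ 2 ^ p * ((3 * CF) ^ p + (3 * (1 + L) * ‖fderiv ℝ φ x‖) ^ p) :=
      Stmt12Aux.rpow_add_le _ _ p (by linarith) (by positivity) hp0.le
    have h5 : (3 * (1 + L) * ‖fderiv ℝ φ x‖) ^ p = (3 * (1 + L)) ^ p * ‖fderiv ℝ φ x‖ ^ p :=
      Real.mul_rpow (by positivity) hD0
    have h6 : (0:ℝ) ≤ 2 ^ p := Real.rpow_nonneg (by norm_num) p
    have h7 : 0 ≤ ‖fderiv ℝ φ x‖ ^ p := Real.rpow_nonneg hD0 p
    calc |h x| ≤ β * (1 + mnorm33 (cols (Fb + Dalpha φ x) (L • D3 φ x)) ^ p) := h1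
      _ ≤ β * (1 + c1 + c2 * ‖fderiv ℝ φ x‖ ^ p) := by
          rw [hc1, hc2]
          have h8 : mnorm33 (cols (Fb + Dalpha φ x) (L • D3 φ x)) ^ p
              ≤ 2 ^ p * (3 * CF) ^ p + 2 ^ p * (3 * (1 + L)) ^ p * ‖fderiv ℝ φ x‖ ^ p := by
            rw [h5] at h4
            nlinarith
          nlinarith
  -- integrability of the integrand
  haveI hfinS : IsFiniteMeasure (volume.restrict stripset) := by
    constructor
    rw [Measure.restrict_apply_univ, Stmt12Aux.volume_stripset]
    exact ENNReal.ofNat_lt_top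
  have hintD : Integrable (fun x : E2 × ℝ => ‖fderiv ℝ φ x‖ ^ p) (volume.restrict stripset) := by
    have h0 := hsob.2.2.integrable_norm_rpow
      (by simp only [ne_eq, ENNReal.ofReal_eq_zero, not_le]; exact hp0)
      ENNReal.ofReal_ne_top
    simpa [ENNReal.toReal_ofReal hp0.le] using h0
  have hint : IntegrableOn h stripset volume := by
    refine Integrable.mono'
      (g := fun x : E2 × ℝ => β * (1 + c1 + c2 * ‖fderiv ℝ φ x‖ ^ p)) ?_
      hmeas.aestronglyMeasurable ?_
    · have : Integrable (fun x : E2 × ℝ => 1 + c1 + c2 * ‖fderiv ℝ φ x‖ ^ p)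
          (volume.restrict stripset) := (integrable_const (1 + c1)).add (hintD.const_mul c2)
      simpa [mul_add, mul_assoc] using this.const_mul β
    · exact Filter.Eventually.of_forall fun x => by
        rw [Real.norm_eq_abs]; exact hbound x
  -- conclusion: the sequence is constant for n ≥ 1
  refine tendsto_atTop_of_eventually_const (i₀ := 1) fun n hn => ?_
  exact Stmt12Aux.key_aux h hmeas hper' hint n hn
end
end
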